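/- arXiv:1009.4814 — 4 statements merged into one kernel-verified Lean document; each statement's English description precedes it below -/
import Mathlib

section
/- For all ν ≥ 1 and all u₁, u₂ > 0, the harmonic-mean/geometric-mean inequality 2·I_ν(u₁)·I_ν(u₂)/(I_ν(u₁) + I_ν(u₂)) ≤ I_ν(√(u₁·u₂)) holds, with equality if and only if u₁ = u₂. -/
open Real MeasureTheory Set

/-- The modified Bessel function of the first kind of order `ν`. -/
noncomputable def besselI (ν u : ℝ) : ℝ :=
  ∑' n : ℕ, (u / 2) ^ (2 * (n : ℝ) + ν) / ((n.factorial : ℝ) * Real.Gamma ((n : ℝ) + ν + 1))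

noncomputable def bC (ν : ℝ) (n : ℕ) : ℝ :=
  1 / ((n.factorial : ℝ) * Real.Gamma ((n : ℝ) + ν + 1))

noncomputable def bF (ν : ℝ) (k : ℕ) (y : ℝ) : ℝ :=
  ∑' n : ℕ, (2 * (n : ℝ) + ν) ^ k * bC ν n * Real.exp ((2 * (n : ℝ) + ν) * y)

lemma gamma_arg_pos (ν : ℝ) (hν : 1 ≤ ν) (n : ℕ) : (0:ℝ) < (n : ℝ) + ν + 1 := by
  have := (n.cast_nonneg : (0:ℝ) ≤ n); linarith

lemma gamma_ge_one (ν : ℝ) (hν : 1 ≤ ν) (n : ℕ) : (1:ℝ) ≤ Real.Gamma ((n : ℝ) + ν + 1) := by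
  have h2 : (2:ℝ) ≤ (n : ℝ) + ν + 1 := by have := (n.cast_nonneg : (0:ℝ) ≤ n); linarith
  have := Real.Gamma_strictMonoOn_Ici.monotoneOn (a := 2) (b := ((n : ℝ) + ν + 1))
    (by simp [mem_Ici]) (by simpa [mem_Ici] using h2) h2
  rwa [Real.Gamma_two] at this

lemma bC_pos (ν : ℝ) (hν : 1 ≤ ν) (n : ℕ) : 0 < bC ν n := by
  have h1 : (0:ℝ) < n.factorial := by exact_mod_cast n.factorial_pos
  have h2 := Real.Gamma_pos_of_pos (gamma_arg_pos ν hν n)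
  exact div_pos one_pos (by positivity)

lemma bC_le (ν : ℝ) (hν : 1 ≤ ν) (n : ℕ) : bC ν n ≤ 1 / (n.factorial : ℝ) := by
  have h1 : (0:ℝ) < n.factorial := by exact_mod_cast n.factorial_pos
  have h2 := gamma_ge_one ν hν n
  rw [bC, div_le_div_iff₀ (by nlinarith) h1]
  nlinarith

lemma lam_pos (ν : ℝ) (hν : 1 ≤ ν) (n : ℕ) : (0:ℝ) < 2 * (n : ℝ) + ν := by
  have := (n.cast_nonneg : (0:ℝ) ≤ n); linarith

lemma pow_le_fact_exp (k : ℕ) {x : ℝ} (hx : 0 ≤ x) : x ^ k ≤ (k.factorial : ℝ) * Real.exp x := by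
  have h := Real.sum_le_exp_of_nonneg hx (k + 1)
  have h2 : x ^ k / (k.factorial : ℝ) ≤ ∑ i ∈ Finset.range (k + 1), x ^ i / (i.factorial : ℝ) := by
    refine Finset.single_le_sum (f := fun i => x ^ i / (i.factorial : ℝ)) ?_ ?_
    · intro i _; positivity
    · exact Finset.self_mem_range_succ k
  have h3 : (0:ℝ) < k.factorial := by exact_mod_cast k.factorial_pos
  rw [div_le_iff₀ h3] at h2
  calc x ^ k ≤ (∑ i ∈ Finset.range (k + 1), x ^ i / (i.factorial : ℝ)) * k.factorial := h2
    _ ≤ Real.exp x * k.factorial := by gcongr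
    _ = (k.factorial : ℝ) * Real.exp x := by ring

lemma summable_term (ν : ℝ) (hν : 1 ≤ ν) (k : ℕ) (y : ℝ) :
    Summable (fun n : ℕ => (2 * (n : ℝ) + ν) ^ k * bC ν n * Real.exp ((2 * (n : ℝ) + ν) * y)) := by
  have hsum : Summable (fun n : ℕ =>
      ((k.factorial : ℝ) * Real.exp (ν * (y + 1))) * (Real.exp (2 * (y + 1)) ^ n / (n.factorial : ℝ))) :=
    (Real.summable_pow_div_factorial (Real.exp (2 * (y + 1)))).mul_left _
  refine Summable.of_nonneg_of_le (fun n => ?_) (fun n => ?_) hsum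
  · have := bC_pos ν hν n
    have := lam_pos ν hν n
    positivity
  · have hlam := lam_pos ν hν n
    have h1 : (2 * (n : ℝ) + ν) ^ k ≤ (k.factorial : ℝ) * Real.exp (2 * (n : ℝ) + ν) :=
      pow_le_fact_exp k hlam.le
    have h2 : bC ν n ≤ 1 / (n.factorial : ℝ) := bC_le ν hν n
    have hfn : (0:ℝ) < n.factorial := by exact_mod_cast n.factorial_pos
    have hb : (0:ℝ) < bC ν n := bC_pos ν hν n
    calc (2 * (n : ℝ) + ν) ^ k * bC ν n * Real.exp ((2 * (n : ℝ) + ν) * y)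
        ≤ ((k.factorial : ℝ) * Real.exp (2 * (n : ℝ) + ν)) * (1 / (n.factorial : ℝ)) *
            Real.exp ((2 * (n : ℝ) + ν) * y) := by
          gcongr
      _ = ((k.factorial : ℝ) * Real.exp (ν * (y + 1))) * (Real.exp (2 * (y + 1)) ^ n / (n.factorial : ℝ)) := by
          have hexp : Real.exp (2 * (n : ℝ) + ν) * Real.exp ((2 * (n : ℝ) + ν) * y)
              = Real.exp (ν * (y + 1)) * Real.exp ((n : ℝ) * (2 * (y + 1))) := by
            rw [← Real.exp_add, ← Real.exp_add]; ring_nf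
          rw [← Real.exp_nat_mul]
          calc (k.factorial : ℝ) * Real.exp (2 * (n : ℝ) + ν) * (1 / (n.factorial : ℝ)) *
                Real.exp ((2 * (n : ℝ) + ν) * y)
              = (Real.exp (2 * (n : ℝ) + ν) * Real.exp ((2 * (n : ℝ) + ν) * y)) *
                ((k.factorial : ℝ) / (n.factorial : ℝ)) := by ring
            _ = (Real.exp (ν * (y + 1)) * Real.exp ((n : ℝ) * (2 * (y + 1)))) *
                ((k.factorial : ℝ) / (n.factorial : ℝ)) := by rw [hexp]
            _ = ((k.factorial : ℝ) * Real.exp (ν * (y + 1))) *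
                (Real.exp ((n : ℝ) * (2 * (y + 1))) / (n.factorial : ℝ)) := by ring

lemma hasDerivAt_bF (ν : ℝ) (hν : 1 ≤ ν) (k : ℕ) (y : ℝ) :
    HasDerivAt (bF ν k) (bF ν (k + 1) y) y := by
  set g : ℕ → ℝ → ℝ := fun n z => (2 * (n : ℝ) + ν) ^ k * bC ν n * Real.exp ((2 * (n : ℝ) + ν) * z)
    with hg_def
  set g' : ℕ → ℝ → ℝ := fun n z =>
    (2 * (n : ℝ) + ν) ^ (k + 1) * bC ν n * Real.exp ((2 * (n : ℝ) + ν) * z) with hg'_def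
  have key : HasDerivAt (fun z => ∑' n, g n z) (∑' n, g' n y) y := by
    refine hasDerivAt_tsum_of_isPreconnected
      (u := fun n : ℕ => (2 * (n : ℝ) + ν) ^ (k + 1) * bC ν n * Real.exp ((2 * (n : ℝ) + ν) * (y + 1)))
      (summable_term ν hν (k + 1) (y + 1)) isOpen_Iio (convex_Iio (y + 1)).isPreconnected
      (fun n z _ => ?_) (fun n z hz => ?_) (lt_add_one y) (summable_term ν hν k y) (lt_add_one y)
    · have h1 : HasDerivAt (fun w : ℝ => (2 * (n : ℝ) + ν) * w) (2 * (n : ℝ) + ν) z := by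
        simpa using (hasDerivAt_id z).const_mul (2 * (n : ℝ) + ν)
      have h2 := (h1.exp).const_mul ((2 * (n : ℝ) + ν) ^ k * bC ν n)
      refine h2.congr_deriv ?_
      simp only [hg'_def]
      ring
    · have hlam := lam_pos ν hν n
      have hb := bC_pos ν hν n
      have hle : Real.exp ((2 * (n : ℝ) + ν) * z) ≤ Real.exp ((2 * (n : ℝ) + ν) * (y + 1)) := by
        apply Real.exp_le_exp.mpr
        have : z ≤ y + 1 := le_of_lt hz
        nlinarith
      have hpos : (0:ℝ) < (2 * (n : ℝ) + ν) ^ (k+1) * bC ν n := by positivity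
      rw [Real.norm_eq_abs, abs_of_pos (by positivity)]
      exact mul_le_mul_of_nonneg_left hle hpos.le
  exact key

lemma bF_pos (ν : ℝ) (hν : 1 ≤ ν) (k : ℕ) (y : ℝ) : 0 < bF ν k y := by
  refine Summable.tsum_pos (summable_term ν hν k y) (fun n => ?_) 0 ?_
  · have := lam_pos ν hν n; have := bC_pos ν hν n; positivity
  · have := lam_pos ν hν 0; have := bC_pos ν hν 0; positivity

lemma bC_succ (ν : ℝ) (hν : 1 ≤ ν) (n : ℕ) :
    bC ν (n + 1) * (((n : ℝ) + 1) * ((n : ℝ) + ν + 1)) = bC ν n := by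
  have hpos := gamma_arg_pos ν hν n
  have hΓ : Real.Gamma ((↑(n + 1) : ℝ) + ν + 1) = ((n : ℝ) + ν + 1) * Real.Gamma ((n : ℝ) + ν + 1) := by
    push_cast
    rw [show (n : ℝ) + 1 + ν + 1 = ((n : ℝ) + ν + 1) + 1 by ring,
      Real.Gamma_add_one (ne_of_gt hpos)]
  have hΓpos := Real.Gamma_pos_of_pos hpos
  have hfn : (0:ℝ) < n.factorial := by exact_mod_cast n.factorial_pos
  rw [bC, bC, hΓ, Nat.factorial_succ]
  push_cast
  field_simp

lemma bC_shift (ν : ℝ) (hν : 1 ≤ ν) (n : ℕ) :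
    bC ν n / ((n : ℝ) + ν + 1) = bC (ν + 1) n := by
  have hpos := gamma_arg_pos ν hν n
  have hΓ : Real.Gamma ((n : ℝ) + (ν + 1) + 1) = ((n : ℝ) + ν + 1) * Real.Gamma ((n : ℝ) + ν + 1) := by
    rw [show (n : ℝ) + (ν + 1) + 1 = ((n : ℝ) + ν + 1) + 1 by ring,
      Real.Gamma_add_one (ne_of_gt hpos)]
  have hΓpos := Real.Gamma_pos_of_pos hpos
  have hfn : (0:ℝ) < n.factorial := by exact_mod_cast n.factorial_pos
  rw [bC, bC, hΓ]
  field_simp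

lemma exp_shift (ν : ℝ) (n : ℕ) (y : ℝ) :
    Real.exp ((2 * (↑(n + 1) : ℝ) + ν) * y) = Real.exp ((2 * (n : ℝ) + ν) * y) * Real.exp (2 * y) := by
  rw [← Real.exp_add]
  push_cast
  ring_nf

lemma bF2_eq (ν : ℝ) (hν : 1 ≤ ν) (y : ℝ) :
    bF ν 2 y = (ν ^ 2 + 4 * Real.exp (2 * y)) * bF ν 0 y := by
  have hs0 := summable_term ν hν 0 y
  have hs2 := summable_term ν hν 2 y
  set D : ℕ → ℝ := fun n => 4 * (n : ℝ) * ((n : ℝ) + ν) * bC ν n * Real.exp ((2 * (n : ℝ) + ν) * y)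
    with hD_def
  have h1 : ∀ n : ℕ, (2 * (n : ℝ) + ν) ^ 2 * bC ν n * Real.exp ((2 * (n : ℝ) + ν) * y)
      = ν ^ 2 * ((2 * (n : ℝ) + ν) ^ 0 * bC ν n * Real.exp ((2 * (n : ℝ) + ν) * y)) + D n := by
    intro n; simp only [hD_def]; ring
  have hD : Summable D := by
    refine ((hs2.sub (hs0.mul_left (ν ^ 2))).congr (fun n => ?_))
    rw [h1 n]; ring
  have h2 : bF ν 2 y = ν ^ 2 * bF ν 0 y + ∑' n, D n := by
    rw [bF, tsum_congr h1, Summable.tsum_add (hs0.mul_left (ν ^ 2)) hD, tsum_mul_left]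
    rfl
  have h3 : ∀ n : ℕ, D (n + 1) = 4 * Real.exp (2 * y) *
      ((2 * (n : ℝ) + ν) ^ 0 * bC ν n * Real.exp ((2 * (n : ℝ) + ν) * y)) := by
    intro n
    simp only [hD_def]
    rw [exp_shift]
    have hrec := bC_succ ν hν n
    push_cast
    linear_combination 4 * Real.exp ((2 * (n : ℝ) + ν) * y) * Real.exp (2 * y) * hrec
  have h4 : ∑' n, D n = 4 * Real.exp (2 * y) * bF ν 0 y := by
    rw [Summable.tsum_eq_zero_add hD]
    have hz : D 0 = 0 := by simp [hD_def]
    rw [hz, zero_add, tsum_congr h3, tsum_mul_left]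
    rfl
  rw [h2, h4]; ring

noncomputable def bT (ν : ℝ) (y : ℝ) : ℝ :=
  ∑' n : ℕ, bC (ν + 1) n * Real.exp ((2 * (n : ℝ) + ν) * y)

lemma summable_bT (ν : ℝ) (hν : 1 ≤ ν) (y : ℝ) :
    Summable (fun n : ℕ => bC (ν + 1) n * Real.exp ((2 * (n : ℝ) + ν) * y)) := by
  refine Summable.of_nonneg_of_le (fun n => ?_) (fun n => ?_) ((summable_term ν hν 0 y).congr
    (fun n => by rw [pow_zero, one_mul]))
  · have := bC_pos (ν + 1) (by linarith) n; positivity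
  · have h1 : bC (ν + 1) n ≤ bC ν n := by
      rw [← bC_shift ν hν n]
      have hb := bC_pos ν hν n
      have harg := gamma_arg_pos ν hν n
      rw [div_le_iff₀ harg]
      nlinarith
    have := Real.exp_pos ((2 * (n : ℝ) + ν) * y)
    exact mul_le_mul_of_nonneg_right h1 this.le

lemma bT_pos (ν : ℝ) (hν : 1 ≤ ν) (y : ℝ) : 0 < bT ν y := by
  refine Summable.tsum_pos (summable_bT ν hν y) (fun n => ?_) 0 ?_
  · have := bC_pos (ν + 1) (by linarith) n; positivity
  · have := bC_pos (ν + 1) (by linarith) 0; positivity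

lemma bF1_eq (ν : ℝ) (hν : 1 ≤ ν) (y : ℝ) :
    bF ν 1 y = ν * bF ν 0 y + 2 * Real.exp (2 * y) * bT ν y := by
  have hs0 := summable_term ν hν 0 y
  have hs1 := summable_term ν hν 1 y
  set E : ℕ → ℝ := fun n => 2 * (n : ℝ) * bC ν n * Real.exp ((2 * (n : ℝ) + ν) * y) with hE_def
  have h1 : ∀ n : ℕ, (2 * (n : ℝ) + ν) ^ 1 * bC ν n * Real.exp ((2 * (n : ℝ) + ν) * y)
      = ν * ((2 * (n : ℝ) + ν) ^ 0 * bC ν n * Real.exp ((2 * (n : ℝ) + ν) * y)) + E n := by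
    intro n; simp only [hE_def]; ring
  have hE : Summable E := by
    refine ((hs1.sub (hs0.mul_left ν)).congr (fun n => ?_))
    rw [h1 n]; ring
  have h2 : bF ν 1 y = ν * bF ν 0 y + ∑' n, E n := by
    rw [bF, tsum_congr h1, Summable.tsum_add (hs0.mul_left ν) hE, tsum_mul_left]
    rfl
  have h3 : ∀ n : ℕ, E (n + 1) = 2 * Real.exp (2 * y) *
      (bC (ν + 1) n * Real.exp ((2 * (n : ℝ) + ν) * y)) := by
    intro n
    simp only [hE_def]
    rw [exp_shift]
    have hrec := bC_succ ν hν n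
    have hshift := bC_shift ν hν n
    have harg := gamma_arg_pos ν hν n
    push_cast
    have hkey : ((n : ℝ) + 1) * bC ν (n + 1) = bC (ν + 1) n := by
      rw [← hshift]
      field_simp
      nlinarith [hrec]
    linear_combination 2 * Real.exp ((2 * (n : ℝ) + ν) * y) * Real.exp (2 * y) * hkey
  have h4 : ∑' n, E n = 2 * Real.exp (2 * y) * bT ν y := by
    rw [Summable.tsum_eq_zero_add hE]
    have hz : E 0 = 0 := by simp [hE_def]
    rw [hz, zero_add, tsum_congr h3, tsum_mul_left]
    rfl
  rw [h2, h4]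

noncomputable def bW (ν : ℝ) (y : ℝ) : ℝ :=
  ∑' n : ℕ, ((n : ℝ) + ν + 1) * bC ν n * Real.exp ((2 * (n : ℝ) + ν) * y)

lemma summable_bW (ν : ℝ) (hν : 1 ≤ ν) (y : ℝ) :
    Summable (fun n : ℕ => ((n : ℝ) + ν + 1) * bC ν n * Real.exp ((2 * (n : ℝ) + ν) * y)) := by
  have hs0 := summable_term ν hν 0 y
  have hs1 := summable_term ν hν 1 y
  refine ((hs1.mul_left (1/2)).add (hs0.mul_left (ν/2 + 1))).congr (fun n => ?_)
  ring

lemma bW_eq (ν : ℝ) (hν : 1 ≤ ν) (y : ℝ) :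
    bW ν y = (1/2) * bF ν 1 y + (ν/2 + 1) * bF ν 0 y := by
  have hs0 := summable_term ν hν 0 y
  have hs1 := summable_term ν hν 1 y
  rw [bW, tsum_congr (f := fun n : ℕ => ((n : ℝ) + ν + 1) * bC ν n * Real.exp ((2 * (n : ℝ) + ν) * y))
    (g := fun n : ℕ => (1/2) * ((2 * (n : ℝ) + ν) ^ 1 * bC ν n * Real.exp ((2 * (n : ℝ) + ν) * y))
      + (ν/2 + 1) * ((2 * (n : ℝ) + ν) ^ 0 * bC ν n * Real.exp ((2 * (n : ℝ) + ν) * y)))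
    (fun n => by ring),
    Summable.tsum_add (hs1.mul_left _) (hs0.mul_left _), tsum_mul_left, tsum_mul_left]
  rfl

lemma cauchy_schwarz (ν : ℝ) (hν : 1 ≤ ν) (y : ℝ) :
    (bF ν 0 y) ^ 2 ≤ bT ν y * bW ν y := by
  set f : ℕ → ℝ := fun n => bC (ν + 1) n * Real.exp ((2 * (n : ℝ) + ν) * y) with hf_def
  set g : ℕ → ℝ := fun n => ((n : ℝ) + ν + 1) * bC ν n * Real.exp ((2 * (n : ℝ) + ν) * y) with hg_def
  have hf_nonneg : ∀ n, 0 ≤ f n := fun n => by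
    have := bC_pos (ν + 1) (by linarith) n; positivity
  have hg_nonneg : ∀ n, 0 ≤ g n := fun n => by
    have := bC_pos ν hν n
    have := gamma_arg_pos ν hν n
    positivity
  have hT_nonneg : 0 ≤ bT ν y := (bT_pos ν hν y).le
  have hW_nonneg : 0 ≤ bW ν y := by
    rw [bW]; exact tsum_nonneg hg_nonneg
  have hTW : (0:ℝ) ≤ bT ν y * bW ν y := mul_nonneg hT_nonneg hW_nonneg
  have hmul : ∀ n : ℕ, f n * g n =
      ((2 * (n : ℝ) + ν) ^ 0 * bC ν n * Real.exp ((2 * (n : ℝ) + ν) * y)) ^ 2 := by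
    intro n
    have hshift := bC_shift ν hν n
    have harg := gamma_arg_pos ν hν n
    simp only [hf_def, hg_def, pow_zero, one_mul]
    rw [← hshift]
    field_simp
  have key : ∀ s : Finset ℕ,
      ∑ n ∈ s, (2 * (n : ℝ) + ν) ^ 0 * bC ν n * Real.exp ((2 * (n : ℝ) + ν) * y)
        ≤ Real.sqrt (bT ν y * bW ν y) := by
    intro s
    have hterm : ∀ n : ℕ, (2 * (n : ℝ) + ν) ^ 0 * bC ν n * Real.exp ((2 * (n : ℝ) + ν) * y)
        = Real.sqrt (f n) * Real.sqrt (g n) := by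
      intro n
      rw [← Real.sqrt_mul (hf_nonneg n), hmul n]
      rw [Real.sqrt_sq]
      have := bC_pos ν hν n
      positivity
    rw [Real.le_sqrt (by
      refine Finset.sum_nonneg (fun n _ => ?_)
      have := bC_pos ν hν n
      positivity) hTW]
    calc (∑ n ∈ s, (2 * (n : ℝ) + ν) ^ 0 * bC ν n * Real.exp ((2 * (n : ℝ) + ν) * y)) ^ 2
        = (∑ n ∈ s, Real.sqrt (f n) * Real.sqrt (g n)) ^ 2 := by
          rw [Finset.sum_congr rfl (fun n _ => hterm n)]
      _ ≤ (∑ n ∈ s, Real.sqrt (f n) ^ 2) * ∑ n ∈ s, Real.sqrt (g n) ^ 2 :=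
          Finset.sum_mul_sq_le_sq_mul_sq s _ _
      _ = (∑ n ∈ s, f n) * ∑ n ∈ s, g n := by
          rw [Finset.sum_congr rfl (fun n _ => Real.sq_sqrt (hf_nonneg n)),
            Finset.sum_congr rfl (fun n _ => Real.sq_sqrt (hg_nonneg n))]
      _ ≤ bT ν y * bW ν y := by
          refine mul_le_mul ?_ ?_ (Finset.sum_nonneg (fun n _ => hg_nonneg n)) hT_nonneg
          · exact Summable.sum_le_tsum s (fun n _ => hf_nonneg n) (summable_bT ν hν y)
          · exact Summable.sum_le_tsum s (fun n _ => hg_nonneg n) (summable_bW ν hν y)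
  have h5 : bF ν 0 y ≤ Real.sqrt (bT ν y * bW ν y) :=
    Summable.tsum_le_of_sum_le (summable_term ν hν 0 y) key
  have := (Real.le_sqrt (bF_pos ν hν 0 y).le hTW).mp h5
  exact this

lemma key_pos (ν : ℝ) (hν : 1 ≤ ν) (y : ℝ) :
    0 < 2 * (bF ν 1 y) ^ 2 - bF ν 0 y * bF ν 2 y := by
  set a := bF ν 0 y with ha_def
  set s := bF ν 1 y with hs_def
  set T := bT ν y with hT_def
  have ha : 0 < a := bF_pos ν hν 0 y
  have hs : 0 < s := bF_pos ν hν 1 y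
  have hT : 0 < T := bT_pos ν hν y
  set E := Real.exp (2 * y) with hE_def
  have hE : 0 < E := Real.exp_pos _
  set r := Real.sqrt E with hr_def
  have hr : 0 < r := Real.sqrt_pos.mpr hE
  have hr2 : r ^ 2 = E := Real.sq_sqrt hE.le
  have h1 : s = ν * a + 2 * E * T := bF1_eq ν hν y
  have h2 : a ^ 2 ≤ T * ((1/2) * s + (ν/2 + 1) * a) := by
    have := cauchy_schwarz ν hν y
    rwa [bW_eq ν hν y] at this
  have hF2 : bF ν 0 y * bF ν 2 y = (ν ^ 2 + 4 * E) * a ^ 2 := by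
    rw [bF2_eq ν hν y]; ring
  rw [hF2]
  -- from h1 and h2: s² + 2as - ν²a² - 2νa² ≥ 4Ea²
  have hTval : 2 * E * T = s - ν * a := by linarith
  have hmain : 4 * E * a ^ 2 ≤ s ^ 2 + 2 * a * s - ν ^ 2 * a ^ 2 - 2 * ν * a ^ 2 := by
    have h2' : 2 * E * a ^ 2 ≤ (2 * E * T) * ((1/2) * s + (ν/2 + 1) * a) :=
      by nlinarith [h2]
    rw [hTval] at h2'
    nlinarith [h2']
  have hsa : ν * a < s := by nlinarith
  rcases le_or_gt (2 * r * a) s with hcase | hcase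
  · -- s ≥ 2ra, so s² ≥ 4Ea²
    nlinarith [sq_nonneg (s - ν * a), mul_pos ha hs]
  · -- s < 2ra
    nlinarith [sq_nonneg (r - 1), sq_nonneg ((r - 1) * a), mul_pos hr ha, mul_pos ha hs,
      sq_nonneg (s - 2 * r * a), mul_pos (mul_pos hr ha) ha]

lemma strictConvex_inv_bF (ν : ℝ) (hν : 1 ≤ ν) :
    StrictConvexOn ℝ univ (fun y => (bF ν 0 y)⁻¹) := by
  set h : ℝ → ℝ := fun y => (bF ν 0 y)⁻¹ with hh_def
  have hpos : ∀ y, 0 < bF ν 0 y := bF_pos ν hν 0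
  have hd1 : ∀ y, HasDerivAt h (-(bF ν 1 y) / (bF ν 0 y) ^ 2) y := fun y =>
    (hasDerivAt_bF ν hν 0 y).inv (hpos y).ne'
  have hderiv1 : deriv h = fun y => -(bF ν 1 y) / (bF ν 0 y) ^ 2 :=
    funext fun y => (hd1 y).deriv
  have hd2 : ∀ y, HasDerivAt (fun z => -(bF ν 1 z) / (bF ν 0 z) ^ 2)
      ((2 * (bF ν 1 y) ^ 2 - bF ν 0 y * bF ν 2 y) / (bF ν 0 y) ^ 3) y := by
    intro y
    have htop : HasDerivAt (fun z => -(bF ν 1 z)) (-(bF ν 2 y)) y :=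
      (hasDerivAt_bF ν hν 1 y).neg
    have hbot : HasDerivAt (fun z => (bF ν 0 z) ^ 2) (2 * (bF ν 0 y) ^ 1 * bF ν 1 y) y :=
      (hasDerivAt_bF ν hν 0 y).pow 2
    have hne : (bF ν 0 y) ^ 2 ≠ 0 := pow_ne_zero 2 (hpos y).ne'
    have := htop.div hbot hne
    refine this.congr_deriv ?_
    have h0 := (hpos y).ne'
    field_simp
    ring
  have hcont : ContinuousOn h univ := by
    have : Differentiable ℝ h := fun y => (hd1 y).differentiableAt
    exact this.continuous.continuousOn
  refine strictConvexOn_of_deriv2_pos convex_univ hcont (fun y _ => ?_)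
  have : deriv^[2] h y = deriv (deriv h) y := by
    simp [Function.iterate_succ, Function.iterate_one]
  rw [this, hderiv1]
  rw [(hd2 y).deriv]
  exact div_pos (key_pos ν hν y) (pow_pos (hpos y) 3)

lemma besselI_eq (ν u : ℝ) (hu : 0 < u) : besselI ν u = bF ν 0 (Real.log (u / 2)) := by
  rw [besselI, bF]
  apply tsum_congr
  intro n
  rw [pow_zero, one_mul, bC, Real.rpow_def_of_pos (by positivity : (0:ℝ) < u / 2),
    mul_comm (Real.log (u / 2))]
  ring

theorem besselI_harmonic_geometric_mean_inequality (ν u₁ u₂ : ℝ) (hν : 1 ≤ ν)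
    (h₁ : 0 < u₁) (h₂ : 0 < u₂) :
    2 * besselI ν u₁ * besselI ν u₂ / (besselI ν u₁ + besselI ν u₂) ≤
      besselI ν (Real.sqrt (u₁ * u₂)) ∧
    (2 * besselI ν u₁ * besselI ν u₂ / (besselI ν u₁ + besselI ν u₂) =
      besselI ν (Real.sqrt (u₁ * u₂)) ↔ u₁ = u₂) := by
  by_cases heq : u₁ = u₂
  · subst heq
    have hsqrt : Real.sqrt (u₁ * u₁) = u₁ := Real.sqrt_mul_self h₁.le
    rw [hsqrt]
    have ha : 0 < besselI ν u₁ := by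
      rw [besselI_eq ν u₁ h₁]; exact bF_pos ν hν 0 _
    have hval : 2 * besselI ν u₁ * besselI ν u₁ / (besselI ν u₁ + besselI ν u₁) = besselI ν u₁ := by
      have hne : besselI ν u₁ + besselI ν u₁ ≠ 0 := ne_of_gt (by linarith)
      field_simp
      ring
    rw [hval]
    exact ⟨le_refl _, by simp⟩
  · -- strict case
    set y₁ := Real.log (u₁ / 2) with hy₁_def
    set y₂ := Real.log (u₂ / 2) with hy₂_def
    have hne : y₁ ≠ y₂ := by
      intro hcon
      apply heq
      have h := congrArg Real.exp hcon
      rw [Real.exp_log (by positivity), Real.exp_log (by positivity)] at h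
      linarith
    have hmid : Real.log (Real.sqrt (u₁ * u₂) / 2) = (y₁ + y₂) / 2 := by
      have hs4 : Real.sqrt (u₁ * u₂) / 2 = Real.sqrt ((u₁ / 2) * (u₂ / 2)) := by
        rw [show (u₁ / 2) * (u₂ / 2) = (u₁ * u₂) * (1/2)^2 by ring,
          Real.sqrt_mul (by positivity : (0:ℝ) ≤ u₁ * u₂) ((1/2)^2),
          Real.sqrt_sq (by norm_num : (0:ℝ) ≤ 1/2)]
        ring
      rw [hs4, Real.log_sqrt (by positivity), Real.log_mul (by positivity) (by positivity)]
    have sco := strictConvex_inv_bF ν hν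
    have hlt := sco.2 (mem_univ y₁) (mem_univ y₂) hne one_half_pos one_half_pos (by norm_num)
    simp only [smul_eq_mul] at hlt
    set a := bF ν 0 y₁ with ha_def
    set b := bF ν 0 y₂ with hb_def
    have ha : 0 < a := bF_pos ν hν 0 y₁
    have hb : 0 < b := bF_pos ν hν 0 y₂
    have hmid2 : 1/2 * y₁ + 1/2 * y₂ = (y₁ + y₂) / 2 := by ring
    rw [hmid2] at hlt
    set c := bF ν 0 ((y₁ + y₂) / 2) with hc_def
    have hc : 0 < c := bF_pos ν hν 0 _
    -- hlt : c⁻¹ < 1/2 * a⁻¹ + 1/2 * b⁻¹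
    have hkey : 2 * a * b / (a + b) < c := by
      rw [div_lt_iff₀ (by positivity)]
      have h1lt : 1 < c * (1/2 * a⁻¹ + 1/2 * b⁻¹) := by
        have := mul_lt_mul_of_pos_left hlt hc
        rwa [mul_inv_cancel₀ hc.ne'] at this
      have h2lt := mul_lt_mul_of_pos_left h1lt (by positivity : (0:ℝ) < 2 * a * b)
      have e1 : 2 * a * b * (c * (1/2 * a⁻¹ + 1/2 * b⁻¹)) = c * (a + b) := by
        field_simp
        ring
      rw [e1, mul_one] at h2lt
      linarith
    have hrepr1 : besselI ν u₁ = a := besselI_eq ν u₁ h₁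
    have hrepr2 : besselI ν u₂ = b := besselI_eq ν u₂ h₂
    have hrepr3 : besselI ν (Real.sqrt (u₁ * u₂)) = c := by
      rw [besselI_eq ν _ (Real.sqrt_pos.mpr (by positivity)), hmid]
    rw [hrepr1, hrepr2, hrepr3]
    exact ⟨hkey.le, ⟨fun hcontra => absurd hcontra (ne_of_lt hkey), fun hcontra => absurd hcontra heq⟩⟩
end

section
/- For all ν ≥ 1/2 and all u₁, u₂ > 0, the inequality √(I_ν(u₁)·I_ν(u₂)) ≤ √((u₁ + u₂)/(2·√(u₁·u₂))) · I_ν((u₁ + u₂)/2) holds, with equality if and only if u₁ = u₂. -/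
open Real MeasureTheory Set Filter Topology

namespace BesselProof

noncomputable def c (ν : ℝ) (n : ℕ) : ℝ :=
  1 / ((4 : ℝ) ^ n * n.factorial * Real.Gamma ((n : ℝ) + ν + 1))

lemma gamma_arg_pos {ν : ℝ} (hν : 0 ≤ ν) (n : ℕ) : 0 < (n : ℝ) + ν + 1 := by
  have := Nat.cast_nonneg (α := ℝ) n; linarith

lemma gamma_pos {ν : ℝ} (hν : 0 ≤ ν) (n : ℕ) : 0 < Real.Gamma ((n : ℝ) + ν + 1) :=
  Real.Gamma_pos_of_pos (gamma_arg_pos hν n)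

lemma c_pos {ν : ℝ} (hν : 0 ≤ ν) (n : ℕ) : 0 < c ν n := by
  have h1 := gamma_pos hν n
  have h2 : (0:ℝ) < (n.factorial : ℝ) := by exact_mod_cast n.factorial_pos
  have h3 : (0:ℝ) < (4:ℝ)^n := by positivity
  unfold c; positivity

lemma c_succ {ν : ℝ} (hν : 0 ≤ ν) (n : ℕ) :
    c ν (n + 1) * (4 * ((n : ℝ) + 1) * ((n : ℝ) + ν + 1)) = c ν n := by
  have hg : Real.Gamma (((n+1 : ℕ) : ℝ) + ν + 1) = ((n:ℝ) + ν + 1) * Real.Gamma ((n:ℝ) + ν + 1) := by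
    have : (((n+1 : ℕ) : ℝ) + ν + 1) = ((n:ℝ) + ν + 1) + 1 := by push_cast; ring
    rw [this, Real.Gamma_add_one (gamma_arg_pos hν n).ne']
  have h1 := gamma_pos hν n
  have h2 : (0:ℝ) < (n.factorial : ℝ) := by exact_mod_cast n.factorial_pos
  have h3 : (0:ℝ) < (4:ℝ)^n := by positivity
  have h4 := gamma_arg_pos hν n
  unfold c
  rw [hg]
  have hfact : ((n+1).factorial : ℝ) = ((n:ℝ)+1) * n.factorial := by
    rw [Nat.factorial_succ]; push_cast; ring
  rw [hfact, pow_succ]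
  field_simp

lemma gamma_lower {ν : ℝ} (hν : 0 ≤ ν) (n : ℕ) :
    (n.factorial : ℝ) * Real.Gamma (ν + 1) ≤ Real.Gamma ((n : ℝ) + ν + 1) := by
  induction n with
  | zero => simp
  | succ n ih =>

    have hg : Real.Gamma (((n+1 : ℕ) : ℝ) + ν + 1) = ((n:ℝ) + ν + 1) * Real.Gamma ((n:ℝ) + ν + 1) := by
      have : (((n+1 : ℕ) : ℝ) + ν + 1) = ((n:ℝ) + ν + 1) + 1 := by push_cast; ring
      rw [this, Real.Gamma_add_one (gamma_arg_pos hν n).ne']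
    rw [hg]
    have hfact : ((n+1).factorial : ℝ) = ((n:ℝ)+1) * n.factorial := by
      rw [Nat.factorial_succ]; push_cast; ring
    rw [hfact]
    have h1 : ((n:ℝ)+1) ≤ (n:ℝ) + ν + 1 := by linarith
    have h2 : (0:ℝ) ≤ (n.factorial : ℝ) * Real.Gamma (ν+1) := by
      have : 0 < Real.Gamma (ν+1) := Real.Gamma_pos_of_pos (by linarith)
      positivity
    calc ((n:ℝ)+1) * (n.factorial : ℝ) * Real.Gamma (ν+1)
        = ((n:ℝ)+1) * ((n.factorial : ℝ) * Real.Gamma (ν+1)) := by ring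
      _ ≤ ((n:ℝ) + ν + 1) * ((n.factorial : ℝ) * Real.Gamma (ν+1)) := by
          apply mul_le_mul_of_nonneg_right h1 h2
      _ ≤ ((n:ℝ) + ν + 1) * Real.Gamma ((n:ℝ) + ν + 1) := by
          apply mul_le_mul_of_nonneg_left ih (gamma_arg_pos hν n).le

lemma aux_summable (x : ℝ) (hx : 0 < x) :
    Summable (fun n : ℕ => (2*(n:ℝ)+2)^3 * x^n / n.factorial) := by
  set f : ℕ → ℝ := fun n => (2*(n:ℝ)+2)^3 * x^n / n.factorial with hf
  have hpos : ∀ n, 0 < f n := by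
    intro n
    have : (0:ℝ) < (n.factorial : ℝ) := by exact_mod_cast n.factorial_pos
    have h2 : (0:ℝ) < x^n := by positivity
    have h3 : (0:ℝ) < (2*(n:ℝ)+2)^3 := by positivity
    rw [hf]; positivity
  apply summable_of_ratio_test_tendsto_lt_one (l := 0) (by norm_num)
    (Filter.Eventually.of_forall fun n => (hpos n).ne')
  have heq : ∀ n : ℕ, ‖f (n+1)‖ / ‖f n‖ =
      ((2*(n:ℝ)+4)/(2*(n:ℝ)+2))^3 * (x/((n:ℝ)+1)) := by
    intro n
    rw [Real.norm_eq_abs, Real.norm_eq_abs, abs_of_pos (hpos _), abs_of_pos (hpos _), hf]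
    have h1 : (0:ℝ) < (n.factorial : ℝ) := by exact_mod_cast n.factorial_pos
    have h2 : (0:ℝ) < x^n := by positivity
    have h3 : (0:ℝ) < 2*(n:ℝ)+2 := by positivity
    have hfact : (((n+1).factorial : ℕ) : ℝ) = ((n:ℝ)+1) * n.factorial := by
      rw [Nat.factorial_succ]; push_cast; ring
    have hcast : (2*((n:ℕ)+1:ℕ):ℝ) + 2 = 2*(n:ℝ)+4 := by push_cast; ring
    simp only [hfact]
    push_cast
    rw [pow_succ]
    field_simp
    ring
  rw [show (0:ℝ) = 1^3 * 0 by norm_num]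
  apply Tendsto.congr (fun n => (heq n).symm)
  apply Tendsto.mul
  · apply Tendsto.pow
    have : ∀ n : ℕ, (2*(n:ℝ)+4)/(2*(n:ℝ)+2) = 1 + 2/(2*(n:ℝ)+2) := by
      intro n
      have h3 : (0:ℝ) < 2*(n:ℝ)+2 := by positivity
      field_simp; ring
    rw [show (1:ℝ) = 1 + 0 by norm_num]
    apply Tendsto.congr (fun n => (this n).symm)
    apply Tendsto.add tendsto_const_nhds
    apply Filter.Tendsto.div_atTop tendsto_const_nhds
    apply Filter.tendsto_atTop_add_const_right
    exact tendsto_natCast_atTop_atTop.const_mul_atTop (by norm_num)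
  · apply Filter.Tendsto.div_atTop tendsto_const_nhds
    apply Filter.tendsto_atTop_add_const_right
    exact tendsto_natCast_atTop_atTop


set_option maxHeartbeats 1000000 in
lemma summable_master {ν : ℝ} (hν : 0 ≤ ν) {R : ℝ} (hR : 1 ≤ R) :
    Summable (fun n : ℕ => c ν n * (2*(n:ℝ)+2)^3 * R^(2*n)) := by
  have hΓ : 0 < Real.Gamma (ν+1) := Real.Gamma_pos_of_pos (by linarith)
  apply Summable.of_nonneg_of_le
    (f := fun n : ℕ => (1/Real.Gamma (ν+1)) * ((2*(n:ℝ)+2)^3 * (R^2/4)^n / n.factorial))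
  · intro n
    have := c_pos hν n
    have hRp : (0:ℝ) < R := by linarith
    positivity
  · intro n
    have hfac : (0:ℝ) < (n.factorial:ℝ) := by exact_mod_cast n.factorial_pos
    have hfac1 : (1:ℝ) ≤ (n.factorial:ℝ) := by exact_mod_cast n.factorial_pos
    have hΓn := gamma_pos hν n
    have hRp : (0:ℝ) < R := by linarith
    have hnum : (0:ℝ) ≤ (2*(n:ℝ)+2)^3 * R^(2*n) := by positivity
    have key : c ν n ≤ 1 / ((4:ℝ)^n * n.factorial * Real.Gamma (ν+1)) := by
      unfold c
      apply div_le_div_of_nonneg_left (by norm_num) (by positivity)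
      have h1 : Real.Gamma (ν+1) ≤ Real.Gamma ((n:ℝ)+ν+1) := by
        calc Real.Gamma (ν+1) = 1 * Real.Gamma (ν+1) := by ring
          _ ≤ (n.factorial:ℝ) * Real.Gamma (ν+1) := by
              apply mul_le_mul_of_nonneg_right hfac1 hΓ.le
          _ ≤ _ := gamma_lower hν n
      have h4 : (0:ℝ) < (4:ℝ)^n := by positivity
      calc (4:ℝ)^n * n.factorial * Real.Gamma (ν+1)
          ≤ (4:ℝ)^n * n.factorial * Real.Gamma ((n:ℝ)+ν+1) := by
            apply mul_le_mul_of_nonneg_left h1 (by positivity)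
        _ = _ := rfl
    calc c ν n * (2*(n:ℝ)+2)^3 * R^(2*n)
        ≤ (1 / ((4:ℝ)^n * n.factorial * Real.Gamma (ν+1))) * ((2*(n:ℝ)+2)^3 * R^(2*n)) := by
          rw [mul_assoc]
          exact mul_le_mul_of_nonneg_right key hnum
      _ = (1/Real.Gamma (ν+1)) * ((2*(n:ℝ)+2)^3 * (R^2/4)^n / n.factorial) := by
          rw [div_pow, pow_mul]
          field_simp
  · exact (aux_summable (R^2/4) (by positivity)).mul_left _



noncomputable def g (ν u : ℝ) : ℝ := ∑' n : ℕ, c ν n * u ^ (2*n)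
noncomputable def g1 (ν u : ℝ) : ℝ := ∑' n : ℕ, c ν n * (2*n : ℕ) * u ^ (2*n - 1)
noncomputable def g2 (ν u : ℝ) : ℝ := ∑' n : ℕ, c ν n * (2*n : ℕ) * ((2*n - 1 : ℕ)) * u ^ (2*n - 1 - 1)

section bounds
variable {ν : ℝ} (hν : 0 ≤ ν) {R y : ℝ} (hR : 1 ≤ R) (hy : |y| ≤ R)

lemma coeff_cube (n : ℕ) : ((2*n : ℕ) : ℝ) * ((2*n - 1 : ℕ) : ℝ) ≤ (2*(n:ℝ)+2)^3 ∧
    ((2*n : ℕ) : ℝ) ≤ (2*(n:ℝ)+2)^3 ∧ (1:ℝ) ≤ (2*(n:ℝ)+2)^3 := by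
  have h0 : (0:ℝ) ≤ (n:ℝ) := Nat.cast_nonneg n
  have h1 : ((2*n - 1 : ℕ) : ℝ) ≤ 2*(n:ℝ) := by
    have : (2*n - 1 : ℕ) ≤ 2*n := Nat.sub_le _ _
    calc ((2*n - 1 : ℕ) : ℝ) ≤ ((2*n : ℕ) : ℝ) := by exact_mod_cast this
      _ = 2*(n:ℝ) := by push_cast; ring
  have h2 : ((2*n : ℕ) : ℝ) = 2*(n:ℝ) := by push_cast; ring
  have h3 : (0:ℝ) ≤ ((2*n - 1:ℕ):ℝ) := Nat.cast_nonneg _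
  have e : (2*(n:ℝ)+2)^3 = 8*(n:ℝ)^3+24*(n:ℝ)^2+24*(n:ℝ)+8 := by ring
  have c3 : (0:ℝ) ≤ (n:ℝ)^3 := by positivity
  have c2 : (0:ℝ) ≤ (n:ℝ)^2 := by positivity
  refine ⟨?_, ?_, ?_⟩
  · rw [h2, e]
    nlinarith [mul_le_mul_of_nonneg_left h1 (by positivity : (0:ℝ) ≤ 2*(n:ℝ))]
  · rw [h2, e]; linarith
  · rw [e]; linarith

lemma pow_le_R' {R y : ℝ} (hR : 1 ≤ R) (hy : |y| ≤ R) {k m : ℕ} (hk : k ≤ m) :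
    |y| ^ k ≤ R ^ m := by
  calc |y| ^ k ≤ R ^ k := pow_le_pow_left₀ (abs_nonneg y) hy k
    _ ≤ R ^ m := pow_le_pow_right₀ hR hk

include hν hR hy in
lemma norm_term0 (n : ℕ) : ‖c ν n * y ^ (2*n)‖ ≤ c ν n * (2*(n:ℝ)+2)^3 * R^(2*n) := by
  have hc := c_pos hν n
  rw [norm_mul, norm_pow, Real.norm_eq_abs, Real.norm_eq_abs, abs_of_pos hc]
  have h1 : |y| ^ (2*n) ≤ R ^ (2*n) := pow_le_R' hR hy (le_refl _)
  calc c ν n * |y| ^ (2*n) ≤ c ν n * R ^ (2*n) := by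
        exact mul_le_mul_of_nonneg_left h1 hc.le
    _ = c ν n * 1 * R ^ (2*n) := by ring
    _ ≤ c ν n * (2*(n:ℝ)+2)^3 * R^(2*n) := by
        have hRp : (0:ℝ) < R := by linarith
        apply mul_le_mul_of_nonneg_right _ (by positivity)
        exact mul_le_mul_of_nonneg_left (coeff_cube n).2.2 hc.le

include hν hR hy in
lemma norm_term1 (n : ℕ) : ‖c ν n * (2*n : ℕ) * y ^ (2*n - 1)‖ ≤ c ν n * (2*(n:ℝ)+2)^3 * R^(2*n) := by
  have hc := c_pos hν n
  rw [norm_mul, norm_mul, norm_pow, Real.norm_eq_abs, Real.norm_eq_abs, Real.norm_eq_abs,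
    abs_of_pos hc, abs_of_nonneg (Nat.cast_nonneg (2*n) : (0:ℝ) ≤ (2*n:ℕ))]
  have h1 : |y| ^ (2*n - 1) ≤ R ^ (2*n) := pow_le_R' hR hy (Nat.sub_le _ _)
  have hRp : (0:ℝ) < R := by linarith
  calc c ν n * ((2*n:ℕ):ℝ) * |y| ^ (2*n-1) ≤ c ν n * ((2*n:ℕ):ℝ) * R ^ (2*n) := by
        apply mul_le_mul_of_nonneg_left h1
        positivity
    _ ≤ c ν n * (2*(n:ℝ)+2)^3 * R^(2*n) := by
        apply mul_le_mul_of_nonneg_right _ (by positivity)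
        exact mul_le_mul_of_nonneg_left (coeff_cube n).2.1 hc.le

include hν hR hy in
lemma norm_term2 (n : ℕ) : ‖c ν n * (2*n : ℕ) * ((2*n - 1 : ℕ)) * y ^ (2*n - 1 - 1)‖
    ≤ c ν n * (2*(n:ℝ)+2)^3 * R^(2*n) := by
  have hc := c_pos hν n
  rw [norm_mul, norm_mul, norm_mul, norm_pow, Real.norm_eq_abs, Real.norm_eq_abs,
    Real.norm_eq_abs, Real.norm_eq_abs, abs_of_pos hc,
    abs_of_nonneg (Nat.cast_nonneg (2*n) : (0:ℝ) ≤ (2*n:ℕ)),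
    abs_of_nonneg (Nat.cast_nonneg (2*n-1) : (0:ℝ) ≤ (2*n-1:ℕ))]
  have h1 : |y| ^ (2*n - 1 - 1) ≤ R ^ (2*n) := pow_le_R' hR hy (by omega)
  have hRp : (0:ℝ) < R := by linarith
  calc c ν n * ((2*n:ℕ):ℝ) * ((2*n-1:ℕ):ℝ) * |y| ^ (2*n-1-1)
      ≤ c ν n * ((2*n:ℕ):ℝ) * ((2*n-1:ℕ):ℝ) * R ^ (2*n) := by
        apply mul_le_mul_of_nonneg_left h1
        positivity
    _ ≤ c ν n * (2*(n:ℝ)+2)^3 * R^(2*n) := by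
        apply mul_le_mul_of_nonneg_right _ (by positivity)
        rw [mul_assoc]
        exact mul_le_mul_of_nonneg_left (coeff_cube n).1 hc.le

end bounds

lemma summable_g {ν : ℝ} (hν : 0 ≤ ν) (u : ℝ) : Summable (fun n : ℕ => c ν n * u ^ (2*n)) := by
  have hR : (1:ℝ) ≤ |u| + 1 := by linarith [abs_nonneg u]
  exact Summable.of_norm_bounded (summable_master hν hR)
    (norm_term0 hν hR (by linarith [abs_nonneg u]))

lemma summable_g1 {ν : ℝ} (hν : 0 ≤ ν) (u : ℝ) :
    Summable (fun n : ℕ => c ν n * (2*n : ℕ) * u ^ (2*n - 1)) := by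
  have hR : (1:ℝ) ≤ |u| + 1 := by linarith [abs_nonneg u]
  exact Summable.of_norm_bounded (summable_master hν hR)
    (norm_term1 hν hR (by linarith [abs_nonneg u]))

lemma summable_g2 {ν : ℝ} (hν : 0 ≤ ν) (u : ℝ) :
    Summable (fun n : ℕ => c ν n * (2*n : ℕ) * ((2*n - 1 : ℕ)) * u ^ (2*n - 1 - 1)) := by
  have hR : (1:ℝ) ≤ |u| + 1 := by linarith [abs_nonneg u]
  exact Summable.of_norm_bounded (summable_master hν hR)
    (norm_term2 hν hR (by linarith [abs_nonneg u]))

lemma mem_ball_self' (u : ℝ) : u ∈ Metric.ball (0:ℝ) (|u| + 1) := by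
  simp only [Metric.mem_ball, Real.dist_eq, sub_zero]
  linarith [abs_nonneg u]

lemma hasDerivAt_g {ν : ℝ} (hν : 0 ≤ ν) (u : ℝ) : HasDerivAt (g ν) (g1 ν u) u := by
  set R := |u| + 1 with hRdef
  have hR : (1:ℝ) ≤ R := by rw [hRdef]; linarith [abs_nonneg u]
  apply hasDerivAt_tsum_of_isPreconnected (summable_master hν hR)
    Metric.isOpen_ball (convex_ball (0:ℝ) R).isPreconnected
    (g := fun (n : ℕ) (y : ℝ) => c ν n * y ^ (2*n))
    (g' := fun (n : ℕ) (y : ℝ) => c ν n * (2*n : ℕ) * y ^ (2*n - 1))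
    (y₀ := u) (hy₀ := mem_ball_self' u) (hy := mem_ball_self' u)
  · intro n y _
    simpa [mul_assoc] using (hasDerivAt_pow (2*n) y).const_mul (c ν n)
  · intro n y hy
    have : |y| ≤ R := by
      have := Metric.mem_ball.mp hy
      rw [Real.dist_eq, sub_zero] at this
      linarith
    exact norm_term1 hν hR this n
  · exact summable_g hν u

lemma hasDerivAt_g1 {ν : ℝ} (hν : 0 ≤ ν) (u : ℝ) : HasDerivAt (g1 ν) (g2 ν u) u := by
  set R := |u| + 1 with hRdef
  have hR : (1:ℝ) ≤ R := by rw [hRdef]; linarith [abs_nonneg u]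
  apply hasDerivAt_tsum_of_isPreconnected (summable_master hν hR)
    Metric.isOpen_ball (convex_ball (0:ℝ) R).isPreconnected
    (g := fun (n : ℕ) (y : ℝ) => c ν n * (2*n : ℕ) * y ^ (2*n - 1))
    (g' := fun (n : ℕ) (y : ℝ) => c ν n * (2*n : ℕ) * ((2*n - 1 : ℕ)) * y ^ (2*n - 1 - 1))
    (y₀ := u) (hy₀ := mem_ball_self' u) (hy := mem_ball_self' u)
  · intro n y _
    simpa [mul_assoc] using (hasDerivAt_pow (2*n - 1) y).const_mul (c ν n * (2*n : ℕ))
  · intro n y hy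
    have : |y| ≤ R := by
      have := Metric.mem_ball.mp hy
      rw [Real.dist_eq, sub_zero] at this
      linarith
    exact norm_term2 hν hR this n
  · exact summable_g1 hν u



lemma term0_nonneg {ν : ℝ} (hν : 0 ≤ ν) (u : ℝ) (n : ℕ) : 0 ≤ c ν n * u ^ (2*n) := by
  have := c_pos hν n
  have h2 : 0 ≤ u ^ (2*n) := by rw [pow_mul]; positivity
  positivity

lemma g_pos {ν : ℝ} (hν : 0 ≤ ν) (u : ℝ) : 0 < g ν u := by
  apply Summable.tsum_pos (summable_g hν u) (term0_nonneg hν u) 0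
  simpa using c_pos hν 0

lemma g1_pos {ν : ℝ} (hν : 0 ≤ ν) {u : ℝ} (hu : 0 < u) : 0 < g1 ν u := by
  apply Summable.tsum_pos (summable_g1 hν u) _ 1
  · have := c_pos hν 1
    have : (0:ℝ) < c ν 1 * ((2*1 : ℕ):ℝ) * u ^ (2*1 - 1) := by positivity
    simpa using this
  · intro n
    have := c_pos hν n
    positivity

lemma ode {ν : ℝ} (hν : 0 ≤ ν) (u : ℝ) :
    u * g2 ν u + (2*ν+1) * g1 ν u = u * g ν u := by
  have s2 := (summable_g2 hν u).mul_left u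
  have s1 := (summable_g1 hν u).mul_left (2*ν+1)
  have hF : Summable (fun n : ℕ =>
      u * (c ν n * (2*n : ℕ) * ((2*n - 1 : ℕ)) * u ^ (2*n - 1 - 1))
      + (2*ν+1) * (c ν n * (2*n : ℕ) * u ^ (2*n - 1))) := s2.add s1
  have step1 : u * g2 ν u + (2*ν+1) * g1 ν u
      = ∑' n : ℕ, (u * (c ν n * (2*n : ℕ) * ((2*n - 1 : ℕ)) * u ^ (2*n - 1 - 1))
        + (2*ν+1) * (c ν n * (2*n : ℕ) * u ^ (2*n - 1))) := by
    rw [Summable.tsum_add s2 s1, tsum_mul_left, tsum_mul_left]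
    rfl
  rw [step1, Summable.tsum_eq_zero_add hF]
  have hzero : u * (c ν 0 * ((2*0 : ℕ):ℝ) * ((2*0 - 1 : ℕ):ℝ) * u ^ (2*0 - 1 - 1))
      + (2*ν+1) * (c ν 0 * ((2*0 : ℕ):ℝ) * u ^ (2*0 - 1)) = 0 := by norm_num
  have hshift : ∀ n : ℕ,
      u * (c ν (n+1) * ((2*(n+1) : ℕ):ℝ) * ((2*(n+1) - 1 : ℕ):ℝ) * u ^ (2*(n+1) - 1 - 1))
      + (2*ν+1) * (c ν (n+1) * ((2*(n+1) : ℕ):ℝ) * u ^ (2*(n+1) - 1))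
      = u * (c ν n * u ^ (2*n)) := by
    intro n
    have e1 : 2*(n+1) - 1 - 1 = 2*n := by omega
    have e2 : 2*(n+1) - 1 = 2*n + 1 := by omega
    have e3 : ((2*(n+1) : ℕ):ℝ) = 2*(n:ℝ)+2 := by push_cast; ring
    have e4 : ((2*(n+1) - 1 : ℕ):ℝ) = 2*(n:ℝ)+1 := by rw [e2]; push_cast; ring
    rw [e1, e3, e2, ← c_succ hν n, pow_succ]
    push_cast
    ring
  simp only [hzero, hshift, zero_add]
  rw [tsum_mul_left]
  rfl

lemma besselI_eq {ν : ℝ} (hν : 0 ≤ ν) {u : ℝ} (hu : 0 < u) :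
    besselI ν u = (u/2) ^ ν * g ν u := by
  unfold besselI g
  rw [← tsum_mul_left]
  apply tsum_congr
  intro n
  have hu2 : (0:ℝ) < u/2 := by linarith
  have h1 : (u/2) ^ (2*(n:ℝ) + ν) = (u/2) ^ ν * (u/2) ^ (2*n : ℕ) := by
    rw [← Real.rpow_natCast (u/2) (2*n), ← Real.rpow_add hu2]
    congr 1
    push_cast
    ring
  rw [h1]
  have h2 : (u/2) ^ (2*n : ℕ) = u ^ (2*n) / 4 ^ n := by
    rw [div_pow]
    congr 1
    rw [pow_mul]
    norm_num
  rw [h2]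
  unfold c
  have hfac : (0:ℝ) < (n.factorial : ℝ) := by exact_mod_cast n.factorial_pos
  have hΓ := gamma_pos hν n
  have h4 : (0:ℝ) < (4:ℝ)^n := by positivity
  field_simp


noncomputable def ell (ν : ℝ) (u : ℝ) : ℝ :=
  (Real.sqrt (4*u^2 + (4*ν^2 - 1)) - (2*ν+1)) / (2*u)

lemma A_nonneg {ν : ℝ} (hν : 1/2 ≤ ν) : (0:ℝ) ≤ 4*ν^2 - 1 := by nlinarith

lemma sqrt_sq' {ν : ℝ} (hν : 1/2 ≤ ν) {u : ℝ} (hu : 0 < u) :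
    Real.sqrt (4*u^2 + (4*ν^2 - 1)) ^ 2 = 4*u^2 + (4*ν^2 - 1) :=
  Real.sq_sqrt (by nlinarith)

lemma sqrt_pos' {ν : ℝ} (hν : 1/2 ≤ ν) {u : ℝ} (hu : 0 < u) :
    0 < Real.sqrt (4*u^2 + (4*ν^2 - 1)) :=
  Real.sqrt_pos.mpr (by nlinarith)

/-- the quadratic identity for the root ell -/
lemma ell_quad {ν : ℝ} (hν : 1/2 ≤ ν) {t : ℝ} (ht : 0 < t) :
    1 - (2*ν+1) * (ell ν t) / t - (ell ν t)^2 = (ν+1/2)/t^2 := by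
  have hs2 := sqrt_sq' hν ht
  have hs := sqrt_pos' hν ht
  set s := Real.sqrt (4*t^2 + (4*ν^2 - 1)) with hsdef
  have hell : ell ν t = (s - (2*ν+1))/(2*t) := rfl
  rw [hell]
  have ht' : t ≠ 0 := ht.ne'
  field_simp
  linear_combination (-1 : ℝ) * hs2

/-- Q(y) > 0 for y above the root -/
lemma Qpos {ν : ℝ} (hν : 1/2 ≤ ν) {u yv : ℝ} (hu : 0 < u) (hyv : 0 < yv) (hy : ell ν u < yv) :
    0 < u^2*yv^2 + (2*ν+1)*u*yv + (ν+1/2) - u^2 := by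
  have hs2 := sqrt_sq' hν hu
  have hs := sqrt_pos' hν hu
  set s := Real.sqrt (4*u^2 + (4*ν^2 - 1)) with hsdef
  have hlt : s < 2*u*yv + (2*ν+1) := by
    have h1 : (s - (2*ν+1))/(2*u) < yv := hy
    have := (div_lt_iff₀ (by linarith : (0:ℝ) < 2*u)).mp h1
    linarith
  have hsq : s^2 < (2*u*yv + (2*ν+1))^2 := by nlinarith
  nlinarith [hs2]

lemma ell_at_u0 {ν : ℝ} (hν : 1/2 ≤ ν) : ell ν (Real.sqrt (ν+1/2)) = 0 := by
  have h0 : (0:ℝ) < ν + 1/2 := by linarith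
  unfold ell
  have h1 : 4*(Real.sqrt (ν+1/2))^2 + (4*ν^2-1) = (2*ν+1)^2 := by
    rw [Real.sq_sqrt h0.le]; ring
  rw [h1, Real.sqrt_sq (by linarith)]
  simp

lemma ell_nonpos {ν : ℝ} (hν : 1/2 ≤ ν) {t : ℝ} (ht : 0 < t) (ht2 : t^2 ≤ ν + 1/2) :
    ell ν t ≤ 0 := by
  have h1 : Real.sqrt (4*t^2 + (4*ν^2-1)) ≤ 2*ν+1 := by
    have h : 4*t^2 + (4*ν^2-1) ≤ (2*ν+1)^2 := by nlinarith
    calc Real.sqrt (4*t^2 + (4*ν^2-1)) ≤ Real.sqrt ((2*ν+1)^2) := Real.sqrt_le_sqrt h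
      _ = 2*ν+1 := Real.sqrt_sq (by linarith)
  apply div_nonpos_of_nonpos_of_nonneg (by linarith) (by linarith)

lemma ell_pos_imp {ν : ℝ} (hν : 1/2 ≤ ν) {t : ℝ} (ht : 0 < t) (hp : 0 < ell ν t) :
    ν + 1/2 < t^2 := by
  by_contra hcon
  push_neg at hcon
  exact absurd (ell_nonpos hν ht hcon) (not_le.mpr hp)

noncomputable def ellD (ν u : ℝ) : ℝ :=
  (2*ν+1)/(2*u^2) - (4*ν^2-1)/(2*u^2*Real.sqrt (4*u^2 + (4*ν^2 - 1)))

/-- derivative of ell -/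
lemma hasDerivAt_ell {ν : ℝ} (hν : 1/2 ≤ ν) {u : ℝ} (hu : 0 < u) :
    HasDerivAt (ell ν) (ellD ν u) u := by
  unfold ellD
  have hs2 := sqrt_sq' hν hu
  have hs := sqrt_pos' hν hu
  have hinner : HasDerivAt (fun t : ℝ => 4*t^2 + (4*ν^2 - 1)) (8*u) u := by
    have h := ((hasDerivAt_pow 2 u).const_mul (4:ℝ)).add_const (4*ν^2-1)
    exact h.congr_deriv (by norm_num; ring)
  have hsqrt : HasDerivAt (fun t : ℝ => Real.sqrt (4*t^2 + (4*ν^2 - 1)))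
      (1/(2*Real.sqrt (4*u^2 + (4*ν^2 - 1))) * (8*u)) u :=
    (Real.hasDerivAt_sqrt (by nlinarith)).comp u hinner
  have hnum : HasDerivAt (fun t : ℝ => Real.sqrt (4*t^2 + (4*ν^2 - 1)) - (2*ν+1))
      (1/(2*Real.sqrt (4*u^2 + (4*ν^2 - 1))) * (8*u)) u := hsqrt.sub_const _
  have hden : HasDerivAt (fun t : ℝ => 2*t) (2:ℝ) u := by
    simpa using (hasDerivAt_id u).const_mul (2:ℝ)
  have hdiv := hnum.div hden (by linarith : 2*u ≠ 0)
  apply hdiv.congr_deriv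
  set s := Real.sqrt (4*u^2 + (4*ν^2 - 1)) with hsdef
  have hu' : u ≠ 0 := hu.ne'
  field_simp
  linear_combination (-2 : ℝ) * hs2



noncomputable def yy (ν u : ℝ) : ℝ := g1 ν u / g ν u
noncomputable def y2 (ν u : ℝ) : ℝ :=
  (g2 ν u * g ν u - g1 ν u * g1 ν u) / (g ν u)^2

lemma yy_pos {ν : ℝ} (hν0 : 0 ≤ ν) {u : ℝ} (hu : 0 < u) : 0 < yy ν u :=
  div_pos (g1_pos hν0 hu) (g_pos hν0 u)

lemma hasDerivAt_yy {ν : ℝ} (hν0 : 0 ≤ ν) (u : ℝ) : HasDerivAt (yy ν) (y2 ν u) u :=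
  (hasDerivAt_g1 hν0 u).div (hasDerivAt_g hν0 u) (g_pos hν0 u).ne'

lemma riccati {ν : ℝ} (hν0 : 0 ≤ ν) {u : ℝ} (hu : 0 < u) :
    y2 ν u = 1 - (2*ν+1) * yy ν u / u - (yy ν u)^2 := by
  have hode := ode hν0 u
  have hg := (g_pos hν0 u).ne'
  have hu' := hu.ne'
  unfold y2 yy
  field_simp
  linear_combination (g ν u) * hode

lemma y_gt_ell_of_lt {ν : ℝ} (hν : 1/2 < ν) {u : ℝ} (hu : 0 < u) : ell ν u < yy ν u := by
  have hν' : (1:ℝ)/2 ≤ ν := hν.le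
  have hν0 : (0:ℝ) ≤ ν := by linarith
  by_contra hcon
  push_neg at hcon
  set u₀ := Real.sqrt (ν+1/2) with hu₀def
  have hu₀pos : 0 < u₀ := Real.sqrt_pos.mpr (by linarith)
  have hellpos : 0 < ell ν u := lt_of_lt_of_le (yy_pos hν0 hu) hcon
  have hu2 : ν + 1/2 < u^2 := ell_pos_imp hν' hu hellpos
  have hu₀u : u₀ < u := by
    have h1 : u₀^2 = ν+1/2 := Real.sq_sqrt (by linarith)
    nlinarith
  set w : ℝ → ℝ := fun t => yy ν t - ell ν t with hwdef
  have hwderiv : ∀ t, 0 < t → HasDerivAt w (y2 ν t - ellD ν t) t := fun t ht =>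
    (hasDerivAt_yy hν0 t).sub (hasDerivAt_ell hν' ht)
  have hwcont : ContinuousOn w (Icc u₀ u) := fun t ht =>
    ((hwderiv t (lt_of_lt_of_le hu₀pos ht.1)).continuousAt).continuousWithinAt
  have hTclosed : IsClosed (Icc u₀ u ∩ w ⁻¹' (Iic 0)) :=
    hwcont.preimage_isClosed_of_isClosed isClosed_Icc isClosed_Iic
  have hTne : (Icc u₀ u ∩ w ⁻¹' (Iic 0)).Nonempty := by
    refine ⟨u, ⟨⟨hu₀u.le, le_refl u⟩, ?_⟩⟩
    simp only [mem_preimage, mem_Iic, hwdef]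
    linarith
  have hTbdd : BddBelow (Icc u₀ u ∩ w ⁻¹' (Iic 0)) := ⟨u₀, fun t ht => ht.1.1⟩
  set u' := sInf (Icc u₀ u ∩ w ⁻¹' (Iic 0)) with hu'def
  have hu'T := hTclosed.csInf_mem hTne hTbdd
  rw [← hu'def] at hu'T
  have hu'pos : 0 < u' := lt_of_lt_of_le hu₀pos hu'T.1.1
  have hwu₀ : 0 < w u₀ := by
    have he : ell ν u₀ = 0 := ell_at_u0 hν'
    simp only [hwdef, he, sub_zero]
    exact yy_pos hν0 hu₀pos
  have hu₀u' : u₀ < u' := by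
    rcases lt_or_eq_of_le hu'T.1.1 with h | h
    · exact h
    · exfalso
      have := hu'T.2
      rw [← h] at this
      simp only [mem_preimage, mem_Iic] at this
      linarith
  have hpos_before : ∀ t, t ∈ Ico u₀ u' → 0 < w t := by
    rintro t ⟨ht1, ht2⟩
    by_contra hc
    push_neg at hc
    have htT : t ∈ Icc u₀ u ∩ w ⁻¹' (Iic 0) :=
      ⟨⟨ht1, le_trans ht2.le hu'T.1.2⟩, by simpa using hc⟩
    have := csInf_le hTbdd htT
    rw [← hu'def] at this
    linarith
  have hwu' : w u' = 0 := by
    apply le_antisymm (by simpa using hu'T.2)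
    have hcont : ContinuousAt w u' := (hwderiv u' hu'pos).continuousAt
    have htend : Tendsto w (𝓝[<] u') (𝓝 (w u')) :=
      (hcont.continuousWithinAt (s := Iio u')).tendsto
    refine ge_of_tendsto htend ?_
    filter_upwards [Ioo_mem_nhdsLT hu₀u'] with t ht
    exact (hpos_before t ⟨ht.1.le, ht.2⟩).le
  have hd := hwderiv u' hu'pos
  have hslope : Tendsto (slope w u') (𝓝[<] u') (𝓝 (y2 ν u' - ellD ν u')) :=
    (hasDerivAt_iff_tendsto_slope.mp hd).mono_left
      (nhdsWithin_mono u' (fun x hx => ne_of_lt hx))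
  have hdle : y2 ν u' - ellD ν u' ≤ 0 := by
    refine le_of_tendsto hslope ?_
    filter_upwards [Ioo_mem_nhdsLT hu₀u'] with t ht
    have hwt := hpos_before t ⟨ht.1.le, ht.2⟩
    have hts : slope w u' t = w t / (t - u') := by
      rw [slope_def_field, hwu']
      ring_nf
    rw [hts]
    apply le_of_lt
    apply div_neg_of_pos_of_neg hwt
    linarith [ht.2]
  have hyel : yy ν u' = ell ν u' := by
    have : w u' = yy ν u' - ell ν u' := rfl
    rw [this] at hwu'
    linarith
  have hy2 : y2 ν u' = (ν+1/2)/u'^2 := by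
    rw [riccati hν0 hu'pos, hyel, ell_quad hν' hu'pos]
  have hA : 0 < 4*ν^2-1 := by nlinarith
  have hs := sqrt_pos' hν' hu'pos
  have hellD_lt : ellD ν u' < (ν+1/2)/u'^2 := by
    unfold ellD
    have hpos : 0 < (4*ν^2-1)/(2*u'^2*Real.sqrt (4*u'^2 + (4*ν^2 - 1))) := by positivity
    have he : (2*ν+1)/(2*u'^2) = (ν+1/2)/u'^2 := by
      field_simp
    rw [← he]
    linarith [hpos]
  linarith



lemma gamma_half_formula (n : ℕ) :
    Real.Gamma ((n:ℝ) + 1/2 + 1) * ((4:ℝ)^n * n.factorial * 2)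
      = Real.sqrt π * (2*n+1).factorial := by
  induction n with
  | zero =>
    simp only [Nat.cast_zero, zero_add]
    rw [Real.Gamma_add_one (by norm_num : (1/2 : ℝ) ≠ 0), Real.Gamma_one_half_eq]
    norm_num
    linarith
  | succ n ih =>
    have h1 : ((n+1 : ℕ):ℝ) + 1/2 + 1 = ((n:ℝ) + 1/2 + 1) + 1 := by push_cast; ring
    have h2 : Real.Gamma (((n+1 : ℕ):ℝ) + 1/2 + 1)
        = ((n:ℝ) + 1/2 + 1) * Real.Gamma ((n:ℝ) + 1/2 + 1) := by
      rw [h1, Real.Gamma_add_one (by positivity : ((n:ℝ) + 1/2 + 1) ≠ 0)]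
    have h3 : (2*(n+1)+1).factorial = (2*n+3) * ((2*n+2) * (2*n+1).factorial) := by
      have e1 : 2*(n+1)+1 = (2*n+1)+1+1 := by omega
      rw [e1, Nat.factorial_succ, Nat.factorial_succ]
    rw [h2, h3]
    have h4 : ((n+1:ℕ).factorial : ℝ) = ((n:ℝ)+1) * n.factorial := by
      rw [Nat.factorial_succ]; push_cast; ring
    push_cast [h4]
    rw [pow_succ]
    linear_combination (((n:ℝ) + 1/2 + 1) * 4 * ((n:ℝ)+1)) * ih

lemma c_half (n : ℕ) : c (1/2) n * (Real.sqrt π * (2*n+1).factorial) = 2 := by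
  have h := gamma_half_formula n
  have hΓ : 0 < Real.Gamma ((n:ℝ) + 1/2 + 1) := gamma_pos (by norm_num) n
  have hfac : (0:ℝ) < (n.factorial : ℝ) := by exact_mod_cast n.factorial_pos
  have h4 : (0:ℝ) < (4:ℝ)^n := by positivity
  unfold c
  rw [← h]
  field_simp

lemma g_half_eq {u : ℝ} :
    Real.sqrt π * (u * g (1/2) u) = 2 * Real.sinh u := by
  have hπ : (0:ℝ) < Real.sqrt π := Real.sqrt_pos.mpr Real.pi_pos
  rw [Real.sinh_eq_tsum]
  unfold g
  rw [← tsum_mul_left, ← tsum_mul_left, ← tsum_mul_left]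
  apply tsum_congr
  intro n
  have hc := c_half n
  have hfac : (0:ℝ) < ((2*n+1).factorial : ℝ) := by exact_mod_cast (2*n+1).factorial_pos
  have hcval : c (1/2) n = 2 / (Real.sqrt π * (2*n+1).factorial) := by
    rw [eq_div_iff (by positivity)]
    exact hc
  rw [hcval, pow_succ']
  field_simp

lemma y_gt_ell_half {u : ℝ} (hu : 0 < u) : ell (1/2) u < yy (1/2) u := by
  have hπ : (0:ℝ) < Real.sqrt π := Real.sqrt_pos.mpr Real.pi_pos
  have hsh : 0 < Real.sinh u := Real.sinh_pos_iff.mpr hu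
  -- explicit formula for g
  have hgval : ∀ t : ℝ, t ≠ 0 → g (1/2) t = 2 * Real.sinh t / (Real.sqrt π * t) := by
    intro t ht
    have := g_half_eq (u := t)
    field_simp
    linarith [this]
  -- explicit formula for g1 via uniqueness of derivatives
  set sfun : ℝ → ℝ := fun t => 2 * Real.sinh t / (Real.sqrt π * t) with hsfun
  have hsd : HasDerivAt sfun
      ((2 * Real.cosh u * (Real.sqrt π * u) - 2 * Real.sinh u * Real.sqrt π)
        / (Real.sqrt π * u)^2) u := by
    apply HasDerivAt.div
    · exact (Real.hasDerivAt_sinh u).const_mul 2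
    · simpa using (hasDerivAt_id u).const_mul (Real.sqrt π)
    · positivity
  have hEv : sfun =ᶠ[𝓝 u] g (1/2) := by
    filter_upwards [eventually_ne_nhds hu.ne'] with t ht
    exact (hgval t ht).symm
  have hg1u : HasDerivAt sfun (g1 (1/2) u) u :=
    (hasDerivAt_g (by norm_num) u).congr_of_eventuallyEq hEv
  have hg1val : g1 (1/2) u
      = (2 * Real.cosh u * (Real.sqrt π * u) - 2 * Real.sinh u * Real.sqrt π)
        / (Real.sqrt π * u)^2 := hg1u.unique hsd
  -- compute yy
  have hyy : yy (1/2) u = (u * Real.cosh u - Real.sinh u) / (u * Real.sinh u) := by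
    unfold yy
    rw [hg1val, hgval u hu.ne']
    have hne2 : Real.sinh u ≠ 0 := hsh.ne'
    field_simp
  have hellval : ell (1/2) u = (2*u - 2)/(2*u) := by
    unfold ell
    have he : (4*u^2 + (4*(1/2:ℝ)^2 - 1)) = (2*u)^2 := by norm_num; ring
    rw [he, Real.sqrt_sq (by linarith)]
    norm_num
  rw [hyy, hellval, div_lt_div_iff₀ (by linarith) (by positivity)]
  nlinarith [mul_pos (mul_pos hu hu) (Real.exp_pos (-u)), Real.cosh_sub_sinh u]

lemma y_gt_ell {ν : ℝ} (hν : 1/2 ≤ ν) {u : ℝ} (hu : 0 < u) : ell ν u < yy ν u := by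
  rcases eq_or_lt_of_le hν with h | h
  · rw [← h]
    exact y_gt_ell_half hu
  · exact y_gt_ell_of_lt h hu




lemma H2_neg {ν : ℝ} (hν : 1/2 ≤ ν) {u : ℝ} (hu : 0 < u) :
    -(ν+1/2)/u^2 + y2 ν u < 0 := by
  have hν0 : (0:ℝ) ≤ ν := by linarith
  have hy := yy_pos hν0 hu
  have hQ := Qpos hν hu hy (y_gt_ell hν hu)
  rw [riccati hν0 hu]
  have h2 : 1 - (2*ν+1) * yy ν u / u - (yy ν u)^2 < (ν+1/2)/u^2 := by
    rw [← sub_pos]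
    have e : (ν+1/2)/u^2 - (1 - (2*ν+1) * yy ν u / u - (yy ν u)^2)
        = (u^2*(yy ν u)^2 + (2*ν+1)*u*(yy ν u) + (ν+1/2) - u^2)/u^2 := by
      field_simp
      ring
    rw [e]
    exact div_pos hQ (by positivity)
  have e2 : -(ν+1/2)/u^2 = -((ν+1/2)/u^2) := by ring
  rw [e2]
  linarith

noncomputable def hfun (ν : ℝ) : ℝ → ℝ := fun u => (ν+1/2)*Real.log u + Real.log (g ν u)

lemma hasDerivAt_hfun {ν : ℝ} (hν0 : 0 ≤ ν) {u : ℝ} (hu : 0 < u) :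
    HasDerivAt (hfun ν) ((ν+1/2)/u + yy ν u) u := by
  have h1 := (Real.hasDerivAt_log hu.ne').const_mul (ν+1/2)
  have h2 : HasDerivAt (fun t => Real.log (g ν t)) ((g ν u)⁻¹ * g1 ν u) u :=
    (Real.hasDerivAt_log (g_pos hν0 u).ne').comp u (hasDerivAt_g hν0 u)
  have h3 := h1.add h2
  apply h3.congr_deriv
  unfold yy
  field_simp

lemma hasDerivAt_H1 {ν : ℝ} (hν0 : 0 ≤ ν) {u : ℝ} (hu : 0 < u) :
    HasDerivAt (fun t => (ν+1/2)/t + yy ν t) (-(ν+1/2)/u^2 + y2 ν u) u := by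
  have h1 : HasDerivAt (fun t : ℝ => (ν+1/2)/t) (-(ν+1/2)/u^2) u := by
    have h := (hasDerivAt_inv hu.ne').const_mul (ν+1/2)
    have h' := h.congr_deriv (show (ν+1/2) * (-(u^2)⁻¹) = -(ν+1/2)/u^2 by field_simp)
    simpa [div_eq_mul_inv] using h'
  exact h1.add (hasDerivAt_yy hν0 u)

lemma deriv2_neg {ν : ℝ} (hν : 1/2 ≤ ν) :
    ∀ x ∈ interior (Ioi (0:ℝ)), deriv^[2] (hfun ν) x < 0 := by
  rw [interior_Ioi]
  intro x hx
  have hν0 : (0:ℝ) ≤ ν := by linarith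
  have hx' : (0:ℝ) < x := hx
  have hEv : deriv (hfun ν) =ᶠ[𝓝 x] fun t => (ν+1/2)/t + yy ν t := by
    filter_upwards [isOpen_Ioi.eventually_mem hx] with t ht
    exact (hasDerivAt_hfun hν0 ht).deriv
  calc deriv^[2] (hfun ν) x = deriv (deriv (hfun ν)) x := rfl
    _ = deriv (fun t => (ν+1/2)/t + yy ν t) x := hEv.deriv_eq
    _ = -(ν+1/2)/x^2 + y2 ν x := (hasDerivAt_H1 hν0 hx').deriv
    _ < 0 := H2_neg hν hx'

lemma strictConcave_hfun {ν : ℝ} (hν : 1/2 ≤ ν) : StrictConcaveOn ℝ (Ioi 0) (hfun ν) :=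
  strictConcaveOn_of_deriv2_neg (convex_Ioi 0)
    (fun x hx => (hasDerivAt_hfun (by linarith) hx).continuousAt.continuousWithinAt)
    (deriv2_neg hν)

lemma hfun_mid {ν : ℝ} (hν : 1/2 ≤ ν) {a b : ℝ} (ha : 0 < a) (hb : 0 < b) (hab : a ≠ b) :
    hfun ν a + hfun ν b < 2 * hfun ν ((a+b)/2) := by
  have h := (strictConcave_hfun hν).2 (mem_Ioi.mpr ha) (mem_Ioi.mpr hb) hab
    (by norm_num : (0:ℝ) < 1/2) (by norm_num : (0:ℝ) < 1/2) (by norm_num)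
  simp only [smul_eq_mul] at h
  have e : (1/2 : ℝ)*a + (1/2 : ℝ)*b = (a+b)/2 := by ring
  rw [e] at h
  linarith

lemma exp_hfun {ν : ℝ} (hν0 : 0 ≤ ν) {u : ℝ} (hu : 0 < u) :
    Real.exp (hfun ν u) = u ^ (ν+1/2) * g ν u := by
  unfold hfun
  rw [Real.exp_add, Real.exp_log (g_pos hν0 u), mul_comm (ν+1/2),
    ← Real.rpow_def_of_pos hu]

lemma sqrt_mul_besselI {ν : ℝ} (hν0 : 0 ≤ ν) {u : ℝ} (hu : 0 < u) :
    Real.sqrt u * besselI ν u * (2:ℝ)^(ν:ℝ) = Real.exp (hfun ν u) := by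
  rw [besselI_eq hν0 hu, exp_hfun hν0 hu]
  have h1 : (u/2 : ℝ)^(ν:ℝ) * (2:ℝ)^(ν:ℝ) = u^(ν:ℝ) := by
    rw [← Real.mul_rpow (by positivity) (by norm_num)]
    norm_num
  have h2 : Real.sqrt u = u ^ (1/2 : ℝ) := Real.sqrt_eq_rpow u
  have h3 : u^(ν+1/2) = u^(ν:ℝ) * u^(1/2:ℝ) := Real.rpow_add hu ν (1/2)
  rw [h2, h3, ← h1]
  ring

lemma besselI_pos {ν : ℝ} (hν0 : 0 ≤ ν) {u : ℝ} (hu : 0 < u) : 0 < besselI ν u := by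
  rw [besselI_eq hν0 hu]
  have h1 : (0:ℝ) < (u/2)^(ν:ℝ) := Real.rpow_pos_of_pos (by linarith) ν
  exact mul_pos h1 (g_pos hν0 u)

lemma key_lt {ν : ℝ} (hν : 1/2 ≤ ν) {a b : ℝ} (ha : 0 < a) (hb : 0 < b) (hab : a ≠ b) :
    Real.sqrt (a*b) * (besselI ν a * besselI ν b)
      < ((a+b)/2) * (besselI ν ((a+b)/2))^2 := by
  have hν0 : (0:ℝ) ≤ ν := by linarith
  set m := (a+b)/2 with hm
  have hmpos : 0 < m := by rw [hm]; linarith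
  have h1 := hfun_mid hν ha hb hab
  have h2 : Real.exp (hfun ν a) * Real.exp (hfun ν b) < Real.exp (hfun ν m)^2 := by
    rw [← Real.exp_add, sq, ← Real.exp_add]
    exact Real.exp_lt_exp.mpr (by rw [← hm] at h1; linarith)
  rw [← sqrt_mul_besselI hν0 ha, ← sqrt_mul_besselI hν0 hb, ← sqrt_mul_besselI hν0 hmpos] at h2
  have h2ν : (0:ℝ) < (2:ℝ)^(ν:ℝ) := Real.rpow_pos_of_pos (by norm_num) ν
  have hs : Real.sqrt a * Real.sqrt b = Real.sqrt (a*b) := (Real.sqrt_mul ha.le b).symm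
  have hm2 : (Real.sqrt m)^2 = m := Real.sq_sqrt hmpos.le
  have e1 : (Real.sqrt a * besselI ν a * (2:ℝ)^(ν:ℝ)) * (Real.sqrt b * besselI ν b * (2:ℝ)^(ν:ℝ))
      = (Real.sqrt (a*b) * (besselI ν a * besselI ν b)) * ((2:ℝ)^(ν:ℝ))^2 := by
    rw [← hs]; ring
  have e2 : (Real.sqrt m * besselI ν m * (2:ℝ)^(ν:ℝ))^2
      = (m * (besselI ν m)^2) * ((2:ℝ)^(ν:ℝ))^2 := by
    rw [mul_pow, mul_pow, hm2]
  rw [e1, e2] at h2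
  exact lt_of_mul_lt_mul_right (lt_of_le_of_lt (le_of_eq rfl) h2) (by positivity)

end BesselProof

open BesselProof in
theorem besselI_geometric_mean_inequality (ν u₁ u₂ : ℝ) (hν : 1 / 2 ≤ ν)
    (h₁ : 0 < u₁) (h₂ : 0 < u₂) :
    Real.sqrt (besselI ν u₁ * besselI ν u₂) ≤
      Real.sqrt ((u₁ + u₂) / (2 * Real.sqrt (u₁ * u₂))) * besselI ν ((u₁ + u₂) / 2) ∧
    (Real.sqrt (besselI ν u₁ * besselI ν u₂) =
      Real.sqrt ((u₁ + u₂) / (2 * Real.sqrt (u₁ * u₂))) * besselI ν ((u₁ + u₂) / 2) ↔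
      u₁ = u₂) := by
  have hν0 : (0:ℝ) ≤ ν := by linarith
  set m := (u₁+u₂)/2 with hm
  have hmpos : 0 < m := by rw [hm]; linarith
  have hA := besselI_pos hν0 h₁
  have hB := besselI_pos hν0 h₂
  have hM := besselI_pos hν0 hmpos
  have hGpos : 0 < Real.sqrt (u₁*u₂) := Real.sqrt_pos.mpr (by positivity)
  have hrw : (u₁+u₂)/(2*Real.sqrt (u₁*u₂)) = m / Real.sqrt (u₁*u₂) := by
    rw [hm, div_div]
  have hRHS : Real.sqrt ((u₁+u₂)/(2*Real.sqrt (u₁*u₂))) * besselI ν m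
      = Real.sqrt ((m * besselI ν m^2) / Real.sqrt (u₁*u₂)) := by
    rw [hrw,
      show m * besselI ν m^2 / Real.sqrt (u₁*u₂)
        = (m/Real.sqrt (u₁*u₂)) * besselI ν m^2 by ring,
      Real.sqrt_mul (by positivity) (besselI ν m^2), Real.sqrt_sq hM.le]
  have key_le : Real.sqrt (u₁*u₂) * (besselI ν u₁ * besselI ν u₂) ≤ m * besselI ν m^2 := by
    rcases eq_or_ne u₁ u₂ with he | hne
    · apply le_of_eq
      have hm1 : m = u₁ := by rw [hm, ← he]; ring
      rw [hm1, ← he, Real.sqrt_mul_self h₁.le]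
      ring
    · have := key_lt hν h₁ h₂ hne
      rw [← hm] at this
      linarith [this]
  constructor
  · rw [hRHS]
    apply Real.sqrt_le_sqrt
    rw [le_div_iff₀ hGpos]
    calc besselI ν u₁ * besselI ν u₂ * Real.sqrt (u₁*u₂)
        = Real.sqrt (u₁*u₂) * (besselI ν u₁ * besselI ν u₂) := by ring
      _ ≤ _ := key_le
  · rw [hRHS]
    constructor
    · intro heq
      by_contra hne
      have hstrict := key_lt hν h₁ h₂ hne
      rw [← hm] at hstrict
      have harg : besselI ν u₁ * besselI ν u₂ < m * besselI ν m^2 / Real.sqrt (u₁*u₂) := by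
        rw [lt_div_iff₀ hGpos]
        calc besselI ν u₁ * besselI ν u₂ * Real.sqrt (u₁*u₂)
            = Real.sqrt (u₁*u₂) * (besselI ν u₁ * besselI ν u₂) := by ring
          _ < _ := hstrict
      have hlt := Real.sqrt_lt_sqrt (by positivity) harg
      rw [heq] at hlt
      exact lt_irrefl _ hlt
    · intro heq
      subst heq
      have hm1 : m = u₁ := by rw [hm]; ring
      rw [hm1, Real.sqrt_mul_self h₁.le,
        show u₁ * besselI ν u₁^2 / u₁ = besselI ν u₁^2 by field_simp,
        show besselI ν u₁ * besselI ν u₁ = besselI ν u₁^2 by ring]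
end

section
/- For every ν ∈ ℝ with |ν| ≥ 1, the function u ↦ K_ν'(u)/K_ν(u)² is strictly decreasing on (0, ∞). -/
set_option linter.unnecessarySimpa false
set_option maxHeartbeats 1000000

open Real MeasureTheory Set Filter Topology

/-- The modified Bessel function of the second kind of order `ν`. -/
noncomputable def besselK (ν u : ℝ) : ℝ :=
  ∫ t in Ioi (0 : ℝ), Real.exp (-u * Real.cosh t) * Real.cosh (ν * t)

namespace BesselKAux

lemma cosh_mul_cosh (A B : ℝ) :
    Real.cosh A * Real.cosh B = (Real.cosh (A + B) + Real.cosh (A - B)) / 2 := by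
  rw [Real.cosh_add, Real.cosh_sub]; ring

lemma sinh_mul_sinh (A B : ℝ) :
    Real.sinh A * Real.sinh B = (Real.cosh (A + B) - Real.cosh (A - B)) / 2 := by
  rw [Real.cosh_add, Real.cosh_sub]; ring

lemma cosh_le_exp_abs (x : ℝ) : Real.cosh x ≤ Real.exp |x| := by
  rw [Real.cosh_eq]
  have h1 : Real.exp x ≤ Real.exp |x| := Real.exp_le_exp.2 (le_abs_self x)
  have h2 : Real.exp (-x) ≤ Real.exp |x| := Real.exp_le_exp.2 (neg_le_abs x)
  linarith

lemma sq_le_cosh (t : ℝ) (ht : 0 ≤ t) : t ^ 2 / 8 ≤ Real.cosh t := by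
  have h1 : t / 2 + 1 ≤ Real.exp (t / 2) := Real.add_one_le_exp (t / 2)
  have h2 : Real.exp (t / 2) * Real.exp (t / 2) = Real.exp t := by
    rw [← Real.exp_add]; ring_nf
  have h3 : Real.exp (-t) > 0 := Real.exp_pos _
  rw [Real.cosh_eq]
  nlinarith [Real.exp_pos (t / 2)]

lemma tendsto_exp_decay (c u : ℝ) (hu : 0 < u) :
    Tendsto (fun t : ℝ => Real.exp (c * t - u * Real.cosh t)) atTop (𝓝 0) := by
  apply Real.tendsto_exp_atBot.comp
  have hq : Tendsto (fun t : ℝ => -(t * (u / 8 * t - c))) atTop atBot := by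
    apply tendsto_neg_atTop_atBot.comp
    exact tendsto_id.atTop_mul_atTop₀
      (tendsto_atTop_add_const_right _ (-c) (tendsto_id.const_mul_atTop (by positivity)))
  apply tendsto_atBot_mono' atTop _ hq
  filter_upwards [eventually_ge_atTop (0 : ℝ)] with t ht
  have := sq_le_cosh t ht
  nlinarith

/-- The integrand. -/
noncomputable def g (u a t : ℝ) : ℝ := Real.exp (-u * Real.cosh t) * Real.cosh (a * t)

lemma besselK_eq_g (a u : ℝ) : besselK a u = ∫ t in Ioi (0 : ℝ), g u a t := rfl

lemma g_pos (u a t : ℝ) : 0 < g u a t :=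
  mul_pos (Real.exp_pos _) (Real.cosh_pos _)

lemma continuous_g (u a : ℝ) : Continuous (g u a) := by
  unfold g; fun_prop

lemma g_le (u a : ℝ) (t : ℝ) (ht : 0 ≤ t) :
    g u a t ≤ Real.exp (|a| * t - u * Real.cosh t) := by
  unfold g
  rw [Real.exp_sub]
  rw [show -u * Real.cosh t = -(u * Real.cosh t) by ring, Real.exp_neg,
    div_eq_mul_inv, mul_comm (Real.exp (|a| * t))]
  gcongr
  calc Real.cosh (a * t) ≤ Real.exp |a * t| := cosh_le_exp_abs _
    _ = Real.exp (|a| * t) := by rw [abs_mul, abs_of_nonneg ht]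

lemma integrable_g (u a : ℝ) (hu : 0 < u) : IntegrableOn (g u a) (Ioi (0 : ℝ)) := by
  apply integrable_of_isBigO_exp_neg (a := 0) (b := 1) one_pos
    ((continuous_g u a).continuousOn)
  rw [Asymptotics.isBigO_iff]
  refine ⟨1, ?_⟩
  have h := (tendsto_exp_decay (|a| + 1) u hu).eventually_le_const one_pos
  filter_upwards [h, eventually_ge_atTop (0 : ℝ)] with t h1 ht
  have hg := g_le u a t ht
  have : Real.exp (|a| * t - u * Real.cosh t)
      = Real.exp ((|a| + 1) * t - u * Real.cosh t) * Real.exp (-1 * t) := by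
    rw [← Real.exp_add]; ring_nf
  rw [Real.norm_eq_abs, Real.norm_eq_abs, abs_of_pos (g_pos u a t),
    abs_of_pos (Real.exp_pos _), one_mul]
  calc g u a t ≤ Real.exp (|a| * t - u * Real.cosh t) := hg
    _ = Real.exp ((|a| + 1) * t - u * Real.cosh t) * Real.exp (-1 * t) := this
    _ ≤ 1 * Real.exp (-1 * t) := by gcongr
    _ = Real.exp (-1 * t) := one_mul _

lemma besselK_pos (a u : ℝ) (hu : 0 < u) : 0 < besselK a u := by
  rw [besselK_eq_g]
  apply setIntegral_pos_iff_support_of_nonneg_ae ?_ (integrable_g u a hu) |>.2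
  · have : (Function.support fun t => g u a t) = univ := by
      ext t; simp [Function.mem_support, (g_pos u a t).ne']
    rw [this]
    simpa using measure_Ioi_pos (α := ℝ) _ 0
  · filter_upwards with t using (g_pos u a t).le

lemma cosh_mul_g (u a t : ℝ) :
    Real.cosh t * g u a t = (g u (a + 1) t + g u (a - 1) t) / 2 := by
  unfold g
  rw [show (a + 1) * t = a * t + t by ring, show (a - 1) * t = a * t - t by ring,
    show Real.cosh (a * t + t) = Real.cosh (a * t) * Real.cosh t * 2 - Real.cosh (a * t - t) by
      rw [cosh_mul_cosh (a * t) t]; ring]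
  ring

lemma integrable_cosh_g (u a : ℝ) (hu : 0 < u) :
    IntegrableOn (fun t => Real.cosh t * g u a t) (Ioi (0 : ℝ)) := by
  have : (fun t => Real.cosh t * g u a t) = fun t => (g u (a + 1) t + g u (a - 1) t) / 2 := by
    funext t; exact cosh_mul_g u a t
  rw [this]
  exact ((integrable_g u (a + 1) hu).add (integrable_g u (a - 1) hu)).div_const 2

lemma integral_cosh_g (u a : ℝ) (hu : 0 < u) :
    ∫ t in Ioi (0 : ℝ), Real.cosh t * g u a t
      = (besselK (a - 1) u + besselK (a + 1) u) / 2 := by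
  rw [besselK_eq_g, besselK_eq_g]
  simp only [cosh_mul_g]
  rw [integral_div, integral_add (integrable_g u (a + 1) hu) (integrable_g u (a - 1) hu),
    add_comm]

lemma g_anti (a t : ℝ) {x y : ℝ} (hxy : x ≤ y) : g y a t ≤ g x a t := by
  unfold g
  exact mul_le_mul_of_nonneg_right
    (Real.exp_le_exp.2 (by nlinarith [Real.cosh_pos t])) (Real.cosh_pos _).le

lemma hasDerivAt_besselK (ν u : ℝ) (hu : 0 < u) :
    HasDerivAt (fun x => besselK ν x)
      (-((besselK (ν - 1) u + besselK (ν + 1) u) / 2)) u := by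
  have hmeas : ∀ᶠ x in 𝓝 u, AEStronglyMeasurable (fun t => g x ν t)
      (volume.restrict (Ioi (0 : ℝ))) :=
    Eventually.of_forall fun x => (continuous_g x ν).aestronglyMeasurable
  have key := hasDerivAt_integral_of_dominated_loc_of_deriv_le
    (F := fun x t => g x ν t) (F' := fun x t => -(Real.cosh t * g x ν t))
    (x₀ := u) (bound := fun t => Real.cosh t * g (u / 2) ν t)
    (μ := volume.restrict (Ioi (0 : ℝ))) (Metric.ball_mem_nhds u (half_pos hu)) hmeas (integrable_g u ν hu)
    ((Continuous.aestronglyMeasurable (by unfold g; fun_prop)))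
    ?_ (integrable_cosh_g (u / 2) ν (half_pos hu)) ?_
  · have h2 : (∫ t in Ioi (0 : ℝ), -(Real.cosh t * g u ν t))
        = -((besselK (ν - 1) u + besselK (ν + 1) u) / 2) := by
      rw [integral_neg, integral_cosh_g u ν hu]
    rw [h2] at key
    simpa [besselK_eq_g] using key.2
  · filter_upwards with t x hx
    have hx2 : u / 2 ≤ x := by
      rw [Metric.mem_ball, Real.dist_eq, abs_lt] at hx
      linarith
    rw [norm_neg, Real.norm_eq_abs, abs_of_nonneg
      (mul_nonneg (Real.cosh_pos t).le (g_pos x ν t).le)]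
    exact mul_le_mul_of_nonneg_left (g_anti ν t hx2) (Real.cosh_pos t).le
  · filter_upwards with t x _
    have h1 : HasDerivAt (fun x : ℝ => -x * Real.cosh t) (-Real.cosh t) x := by
      simpa using ((hasDerivAt_id x).neg.mul_const (Real.cosh t))
    have := (h1.exp.mul_const (Real.cosh (ν * t)))
    refine this.congr_deriv ?_
    unfold g; ring

lemma abs_sinh_le_exp_abs (x : ℝ) : |Real.sinh x| ≤ Real.exp |x| := by
  rw [Real.abs_sinh]
  calc Real.sinh |x| ≤ Real.cosh |x| := by
        rw [Real.sinh_eq, Real.cosh_eq]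
        have := Real.exp_pos (-|x|); linarith
    _ ≤ Real.exp |x| := by
        simpa [abs_abs] using cosh_le_exp_abs |x|

lemma tendsto_boundary (u a : ℝ) (hu : 0 < u) :
    Tendsto (fun t => Real.exp (-u * Real.cosh t) * Real.sinh (a * t)) atTop (𝓝 0) := by
  apply squeeze_zero_norm' ?_ (tendsto_exp_decay |a| u hu)
  filter_upwards [eventually_ge_atTop (0 : ℝ)] with t ht
  rw [Real.norm_eq_abs, abs_mul, abs_of_pos (Real.exp_pos _), Real.exp_sub]
  calc Real.exp (-u * Real.cosh t) * |Real.sinh (a * t)|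
      ≤ Real.exp (-u * Real.cosh t) * Real.exp (|a| * t) := by
        apply mul_le_mul_of_nonneg_left ?_ (Real.exp_pos _).le
        calc |Real.sinh (a * t)| ≤ Real.exp |a * t| := abs_sinh_le_exp_abs _
          _ = Real.exp (|a| * t) := by rw [abs_mul, abs_of_nonneg ht]
    _ = Real.exp (|a| * t) / Real.exp (u * Real.cosh t) := by
        rw [show -u * Real.cosh t = -(u * Real.cosh t) by ring, Real.exp_neg]
        ring

lemma sinh_mul_g (u a t : ℝ) :
    Real.sinh t * (Real.exp (-u * Real.cosh t) * Real.sinh (a * t))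
      = (g u (a + 1) t - g u (a - 1) t) / 2 := by
  unfold g
  rw [show (a + 1) * t = t + a * t by ring, show (a - 1) * t = -(t - a * t) by ring,
    Real.cosh_neg,
    show Real.cosh (t + a * t)
      = Real.sinh t * Real.sinh (a * t) * 2 + Real.cosh (t - a * t) by
        rw [sinh_mul_sinh t (a * t)]; ring]
  ring

lemma besselK_recurrence (u a : ℝ) (hu : 0 < u) :
    a * besselK a u = u / 2 * (besselK (a + 1) u - besselK (a - 1) u) := by
  set f : ℝ → ℝ := fun t => Real.exp (-u * Real.cosh t) * Real.sinh (a * t) with hf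
  set F : ℝ → ℝ := fun t => a * g u a t - u * ((g u (a + 1) t - g u (a - 1) t) / 2) with hF
  have hderiv : ∀ t ∈ Ici (0 : ℝ), HasDerivAt f (F t) t := by
    intro t _
    have h1 : HasDerivAt (fun t : ℝ => -u * Real.cosh t) (-u * Real.sinh t) t :=
      (Real.hasDerivAt_cosh t).const_mul (-u)
    have h2 : HasDerivAt (fun t : ℝ => Real.sinh (a * t)) (Real.cosh (a * t) * a) t := by
      simpa using ((hasDerivAt_id t).const_mul a).sinh
    have h3 := (h1.exp.mul h2)
    refine h3.congr_deriv ?_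
    rw [hF]
    simp only
    rw [← sinh_mul_g u a t]
    unfold g
    ring
  have hint : IntegrableOn F (Ioi (0 : ℝ)) := by
    apply Integrable.sub ((integrable_g u a hu).const_mul a)
    exact (((integrable_g u (a + 1) hu).sub (integrable_g u (a - 1) hu)).div_const 2).const_mul u
  have htend : Tendsto f atTop (𝓝 0) := tendsto_boundary u a hu
  have h0 : f 0 = 0 := by simp [hf]
  have key := integral_Ioi_of_hasDerivAt_of_tendsto' hderiv hint htend
  rw [h0, sub_zero] at key
  have hexp : (∫ t in Ioi (0 : ℝ), F t)
      = a * besselK a u - u * ((besselK (a + 1) u - besselK (a - 1) u) / 2) := by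
    have hi0 : IntegrableOn (fun t => a * g u a t) (Ioi (0 : ℝ)) volume := by
      exact (integrable_g u a hu).const_mul a
    have hi1 : IntegrableOn (fun t => g u (a + 1) t - g u (a - 1) t) (Ioi (0 : ℝ)) volume := by
      exact (integrable_g u (a + 1) hu).sub (integrable_g u (a - 1) hu)
    have hi2 : IntegrableOn (fun t => u * ((g u (a + 1) t - g u (a - 1) t) / 2))
        (Ioi (0 : ℝ)) volume := by
      exact (hi1.div_const 2).const_mul u
    rw [hF, besselK_eq_g, besselK_eq_g, besselK_eq_g, integral_sub hi0 hi2,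
      integral_const_mul, integral_const_mul, integral_div,
      integral_sub (integrable_g u (a + 1) hu) (integrable_g u (a - 1) hu)]
  rw [hexp] at key
  linarith [key]

lemma cosh_sq_le (a t : ℝ) :
    Real.cosh (a * t) ^ 2 ≤ Real.cosh ((a - 1) * t) * Real.cosh ((a + 1) * t) := by
  rw [cosh_mul_cosh]
  rw [show (a - 1) * t + (a + 1) * t = 2 * (a * t) by ring,
    show (a - 1) * t - (a + 1) * t = -(2 * t) by ring, Real.cosh_neg, Real.cosh_two_mul]
  nlinarith [Real.one_le_cosh (2 * t), Real.cosh_sq_sub_sinh_sq (a * t)]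

lemma turan (u a : ℝ) (hu : 0 < u) :
    besselK a u ^ 2 ≤ besselK (a - 1) u * besselK (a + 1) u := by
  set A := besselK (a - 1) u with hA
  set B := besselK (a + 1) u with hB
  have hApos : 0 < A := besselK_pos (a - 1) u hu
  have hBpos : 0 < B := besselK_pos (a + 1) u hu
  set l := Real.sqrt B / Real.sqrt A with hl
  have hsA : 0 < Real.sqrt A := Real.sqrt_pos.2 hApos
  have hsB : 0 < Real.sqrt B := Real.sqrt_pos.2 hBpos
  have hlpos : 0 < l := div_pos hsB hsA
  have hpt : ∀ t : ℝ, g u a t ≤ (l * g u (a - 1) t + l⁻¹ * g u (a + 1) t) / 2 := by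
    intro t
    have hsq : g u a t ^ 2 ≤ g u (a - 1) t * g u (a + 1) t := by
      unfold g
      have h := cosh_sq_le a t
      nlinarith [Real.exp_pos (-u * Real.cosh t), Real.cosh_pos (a * t),
        Real.cosh_pos ((a - 1) * t), Real.cosh_pos ((a + 1) * t), sq_nonneg (Real.exp (-u * Real.cosh t))]
    have h1 := g_pos u a t
    have h2 := g_pos u (a - 1) t
    have h3 := g_pos u (a + 1) t
    have hc : g u a t ≤ Real.sqrt (g u (a - 1) t) * Real.sqrt (g u (a + 1) t) := by
      rw [← Real.sqrt_mul h2.le]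
      exact (Real.le_sqrt h1.le (mul_nonneg h2.le h3.le)).2 hsq
    have key2 : 2 * l * g u a t ≤ l ^ 2 * g u (a - 1) t + g u (a + 1) t := by
      have step : 2 * l * g u a t
          ≤ 2 * l * (Real.sqrt (g u (a - 1) t) * Real.sqrt (g u (a + 1) t)) := by
        apply mul_le_mul_of_nonneg_left hc (by positivity)
      refine step.trans ?_
      nlinarith [sq_nonneg (l * Real.sqrt (g u (a - 1) t) - Real.sqrt (g u (a + 1) t)),
        Real.sq_sqrt h2.le, Real.sq_sqrt h3.le]
    nlinarith [key2, hlpos, mul_inv_cancel₀ hlpos.ne', h2, h3]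
  have hint' : IntegrableOn
      (fun t => (l * g u (a - 1) t + l⁻¹ * g u (a + 1) t) / 2) (Ioi (0 : ℝ)) volume := by
    exact (((integrable_g u (a - 1) hu).const_mul l).add
      ((integrable_g u (a + 1) hu).const_mul l⁻¹)).div_const 2
  have hIa : besselK a u ≤ (l * A + l⁻¹ * B) / 2 := by
    have hmono := integral_mono (μ := volume.restrict (Ioi (0 : ℝ)))
      (integrable_g u a hu) hint' hpt
    rw [besselK_eq_g]
    refine hmono.trans (le_of_eq ?_)
    rw [hA, hB, besselK_eq_g, besselK_eq_g]
    have hi1 : IntegrableOn (fun t => l * g u (a - 1) t) (Ioi (0 : ℝ)) volume := by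
      exact (integrable_g u (a - 1) hu).const_mul l
    have hi2 : IntegrableOn (fun t => l⁻¹ * g u (a + 1) t) (Ioi (0 : ℝ)) volume := by
      exact (integrable_g u (a + 1) hu).const_mul l⁻¹
    rw [integral_div, integral_add hi1 hi2, integral_const_mul, integral_const_mul]
  have e1 : l * A = Real.sqrt A * Real.sqrt B := by
    rw [hl, div_mul_eq_mul_div, mul_div_assoc, Real.div_sqrt]; ring
  have e2 : l⁻¹ * B = Real.sqrt A * Real.sqrt B := by
    rw [hl, inv_div, div_mul_eq_mul_div, mul_div_assoc, Real.div_sqrt]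
  have hsum : (l * A + l⁻¹ * B) / 2 = Real.sqrt A * Real.sqrt B := by
    rw [e1, e2]; ring
  rw [hsum] at hIa
  have hKpos := besselK_pos a u hu
  calc besselK a u ^ 2 ≤ (Real.sqrt A * Real.sqrt B) ^ 2 := by
        apply pow_le_pow_left₀ hKpos.le hIa 2
    _ = A * B := by
        rw [mul_pow, Real.sq_sqrt hApos.le, Real.sq_sqrt hBpos.le]

/-- First derivative of `besselK ν`. -/
noncomputable def Kp (ν u : ℝ) : ℝ := -((besselK (ν - 1) u + besselK (ν + 1) u) / 2)

lemma hasDerivAt_besselK' (ν u : ℝ) (hu : 0 < u) :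
    HasDerivAt (besselK ν) (Kp ν u) u := hasDerivAt_besselK ν u hu

/-- Second derivative of `besselK ν`. -/
noncomputable def Kpp (ν u : ℝ) : ℝ :=
  (besselK (ν - 2) u + 2 * besselK ν u + besselK (ν + 2) u) / 4

lemma hasDerivAt_Kp (ν u : ℝ) (hu : 0 < u) : HasDerivAt (Kp ν) (Kpp ν u) u := by
  have h1 := hasDerivAt_besselK (ν - 1) u hu
  have h2 := hasDerivAt_besselK (ν + 1) u hu
  rw [show ν - 1 - 1 = ν - 2 by ring, show ν - 1 + 1 = ν by ring] at h1
  rw [show ν + 1 - 1 = ν by ring, show ν + 1 + 1 = ν + 2 by ring] at h2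
  have h3 := ((h1.add h2).div_const 2).neg
  have hval : Kpp ν u
      = -((-((besselK (ν - 2) u + besselK ν u) / 2)
          + -((besselK ν u + besselK (ν + 2) u) / 2)) / 2) := by
    unfold Kpp; ring
  rw [hval]
  exact h3

lemma key_ineq (ν u : ℝ) (hu : 0 < u) (hν : 1 ≤ ν ^ 2) :
    Kpp ν u * besselK ν u - 2 * Kp ν u ^ 2 < 0 := by
  set A := besselK (ν - 1) u with hA
  set B := besselK (ν + 1) u with hB
  set C := besselK ν u with hC
  set P := besselK (ν - 2) u with hP
  set Q := besselK (ν + 2) u with hQ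
  have hApos : 0 < A := besselK_pos _ u hu
  have hBpos : 0 < B := besselK_pos _ u hu
  have hCpos : 0 < C := besselK_pos _ u hu
  have e0 : 2 * ν * C = u * (B - A) := by
    have := besselK_recurrence u ν hu; linarith
  have eP : u * P = u * C - 2 * (ν - 1) * A := by
    have h := besselK_recurrence u (ν - 1) hu
    rw [show ν - 1 + 1 = ν by ring, show ν - 1 - 1 = ν - 2 by ring] at h
    linarith
  have eQ : u * Q = u * C + 2 * (ν + 1) * B := by
    have h := besselK_recurrence u (ν + 1) hu
    rw [show ν + 1 + 1 = ν + 2 by ring, show ν + 1 - 1 = ν by ring] at h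
    linarith
  have hturan : C ^ 2 ≤ A * B := turan u ν hu
  set S := u * (A + B) / 2 with hS
  have hSpos : 0 < S := by positivity
  have i : C ^ 2 * (u ^ 2 + ν ^ 2) ≤ S ^ 2 := by
    have e0sq : (2 * ν * C) ^ 2 = (u * (B - A)) ^ 2 := by rw [e0]
    nlinarith [mul_le_mul_of_nonneg_left hturan (sq_nonneg u)]
  have ii : C < S := by
    nlinarith [mul_pos (mul_pos hCpos hCpos) (mul_pos hu hu)]
  have expand : u ^ 2 * ((P + 2 * C + Q) / 4 * C - 2 * ((A + B) / 2) ^ 2)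
      = C ^ 2 * (u ^ 2 + ν ^ 2) + S * C - 2 * S ^ 2 := by
    rw [hS]
    linear_combination (u * C / 4) * eP + (u * C / 4) * eQ - (ν * C / 2) * e0
  have final_u : u ^ 2 * ((P + 2 * C + Q) / 4 * C - 2 * ((A + B) / 2) ^ 2) < 0 := by
    rw [expand]
    nlinarith [mul_pos hSpos (sub_pos.2 ii)]
  have hgoal : (P + 2 * C + Q) / 4 * C - 2 * ((A + B) / 2) ^ 2 < 0 := by
    by_contra h
    push_neg at h
    nlinarith [mul_nonneg (sq_nonneg u) h]
  unfold Kpp Kp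
  rw [← hA, ← hB, ← hC, ← hP, ← hQ]
  nlinarith [hgoal]

end BesselKAux

open BesselKAux

theorem besselK_deriv_div_sq_strictAnti (ν : ℝ) (hν : 1 ≤ |ν|) :
    StrictAntiOn (fun u : ℝ => deriv (besselK ν) u / (besselK ν u) ^ 2) (Ioi 0) := by
  have hν2 : 1 ≤ ν ^ 2 := by
    have := sq_abs ν
    nlinarith [abs_nonneg ν]
  set φ : ℝ → ℝ := fun u => Kp ν u / (besselK ν u) ^ 2 with hφ
  have hD : ∀ u ∈ Ioi (0 : ℝ), HasDerivAt (fun u : ℝ => deriv (besselK ν) u / (besselK ν u) ^ 2)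
      ((Kpp ν u * besselK ν u ^ 2 - Kp ν u * (2 * besselK ν u ^ 1 * Kp ν u))
        / (besselK ν u ^ 2) ^ 2) u := by
    intro u hu
    rw [mem_Ioi] at hu
    have hKpos := besselK_pos ν u hu
    have hden : (besselK ν u) ^ 2 ≠ 0 := by positivity
    have hφd : HasDerivAt φ
        ((Kpp ν u * besselK ν u ^ 2 - Kp ν u * (2 * besselK ν u ^ 1 * Kp ν u))
          / (besselK ν u ^ 2) ^ 2) u :=
      (hasDerivAt_Kp ν u hu).div ((hasDerivAt_besselK' ν u hu).pow 2) hden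
    apply hφd.congr_of_eventuallyEq
    filter_upwards [isOpen_Ioi.mem_nhds (mem_Ioi.2 hu)] with x hx
    rw [hφ]
    simp only
    rw [(hasDerivAt_besselK' ν x (mem_Ioi.1 hx)).deriv]
  apply strictAntiOn_of_deriv_neg (convex_Ioi 0)
  · intro u hu
    exact ((hD u hu).differentiableAt.continuousAt).continuousWithinAt
  · intro u hu
    rw [interior_Ioi] at hu
    rw [(hD u hu).deriv]
    have hu' : (0 : ℝ) < u := mem_Ioi.1 hu
    have hKpos := besselK_pos ν u hu'
    have hkey := key_ineq ν u hu' hν2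
    have hnum : Kpp ν u * besselK ν u ^ 2 - Kp ν u * (2 * besselK ν u ^ 1 * Kp ν u)
        = (Kpp ν u * besselK ν u - 2 * Kp ν u ^ 2) * besselK ν u := by ring
    rw [hnum]
    apply div_neg_of_neg_of_pos
    · exact mul_neg_of_neg_of_pos hkey hKpos
    · positivity
end

section
/- For every ν ∈ ℝ, the function u ↦ u·K_ν'(u)/K_ν(u) is strictly decreasing on (0, ∞); equivalently, K_ν is strictly geometrically concave on (0, ∞). -/
open Real MeasureTheory Set
open Filter

lemma cosh_le_exp_abs (x : ℝ) : Real.cosh x ≤ Real.exp |x| := by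
  rw [Real.cosh_eq]
  have h1 : Real.exp x ≤ Real.exp |x| := Real.exp_le_exp.2 (le_abs_self x)
  have h2 : Real.exp (-x) ≤ Real.exp |x| := Real.exp_le_exp.2 (neg_le_abs x)
  linarith

lemma abs_sinh_le_exp_abs (x : ℝ) : |Real.sinh x| ≤ Real.exp |x| := by
  rw [Real.abs_sinh, Real.sinh_eq]
  have h2 : 0 < Real.exp (-|x|) := Real.exp_pos _
  have h3 : 0 < Real.exp |x| := Real.exp_pos _
  linarith

lemma exponent_bound {u : ℝ} (hu : 0 < u) (c t : ℝ) (ht : 0 < t) :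
    c * t - u * Real.cosh t ≤ 8 * (c + 1) ^ 2 / u - t := by
  have h1 : 1 + t/2 ≤ Real.exp (t/2) := by
    have := Real.add_one_le_exp (t/2); linarith
  have hcosh : t ^ 2 / 8 ≤ Real.cosh t := by
    have he : Real.exp t = Real.exp (t/2) * Real.exp (t/2) := by
      rw [← Real.exp_add]; ring_nf
    have h3 : t^2/4 ≤ Real.exp t := by rw [he]; nlinarith
    rw [Real.cosh_eq]
    have := Real.exp_pos (-t)
    nlinarith
  have key : (c + 1) * t - u * (t^2/8) ≤ 8 * (c+1)^2 / u := by
    rw [le_div_iff₀ hu]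
    nlinarith [sq_nonneg (u * t - 4*(c+1))]
  nlinarith [mul_le_mul_of_nonneg_left hcosh hu.le]

lemma integrable_exp_lin_cosh {u : ℝ} (hu : 0 < u) (c : ℝ) :
    IntegrableOn (fun t => Real.exp (c * t - u * Real.cosh t)) (Ioi (0:ℝ)) := by
  have hcont : Continuous fun t => Real.exp (c * t - u * Real.cosh t) := by continuity
  apply Integrable.mono' ((exp_neg_integrableOn_Ioi (0:ℝ) (one_pos)).const_mul
    (Real.exp (8 * (c+1)^2 / u)))
  · exact hcont.aestronglyMeasurable
  · filter_upwards [ae_restrict_mem measurableSet_Ioi] with t ht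
    rw [Real.norm_eq_abs, abs_of_pos (Real.exp_pos _), ← Real.exp_add]
    apply Real.exp_le_exp.2
    have := exponent_bound hu c t ht
    linarith

/-- master integrability lemma -/
lemma integrableOn_aux {u : ℝ} (hu : 0 < u) (c : ℝ) {f : ℝ → ℝ} (hf : Continuous f)
    (hb : ∀ t ∈ Ioi (0:ℝ), |f t| ≤ Real.exp (c * t - u * Real.cosh t)) :
    IntegrableOn f (Ioi (0:ℝ)) := by
  apply (integrable_exp_lin_cosh hu c).mono' hf.aestronglyMeasurable
  filter_upwards [ae_restrict_mem measurableSet_Ioi] with t ht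
  exact hb t ht

lemma tendsto_exp_lin_cosh {u : ℝ} (hu : 0 < u) (c : ℝ) :
    Tendsto (fun t => Real.exp (c * t - u * Real.cosh t)) atTop (nhds 0) := by
  apply squeeze_zero' (Eventually.of_forall fun t => (Real.exp_pos _).le)
    (g := fun t => Real.exp (8 * (c+1)^2 / u) * Real.exp (-t))
  · filter_upwards [eventually_gt_atTop (0:ℝ)] with t ht
    rw [← Real.exp_add]
    exact Real.exp_le_exp.2 (by have := exponent_bound hu c t ht; linarith)
  · simpa using (Real.tendsto_exp_neg_atTop_nhds_zero).const_mul (Real.exp (8 * (c+1)^2 / u))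

noncomputable def bkK1 (ν u : ℝ) : ℝ :=
  ∫ t in Ioi (0 : ℝ), Real.cosh t * (Real.exp (-u * Real.cosh t) * Real.cosh (ν * t))

noncomputable def bkK2 (ν u : ℝ) : ℝ :=
  ∫ t in Ioi (0 : ℝ), Real.cosh t ^ 2 * (Real.exp (-u * Real.cosh t) * Real.cosh (ν * t))

noncomputable def bkS (ν u : ℝ) : ℝ :=
  ∫ t in Ioi (0 : ℝ), Real.sinh t * Real.sinh (ν * t) * Real.exp (-u * Real.cosh t)

lemma exp_factor_le {ν u : ℝ} (c : ℝ) (hc : |ν| ≤ c) {t : ℝ} (ht : 0 < t) :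
    Real.exp (-u * Real.cosh t) * Real.cosh (ν * t) ≤ Real.exp (c * t - u * Real.cosh t) := by
  have h1 : Real.cosh (ν * t) ≤ Real.exp (c * t) := by
    refine (cosh_le_exp_abs _).trans (Real.exp_le_exp.2 ?_)
    rw [abs_mul, abs_of_pos ht]
    exact mul_le_mul_of_nonneg_right hc ht.le
  calc Real.exp (-u * Real.cosh t) * Real.cosh (ν * t)
      ≤ Real.exp (-u * Real.cosh t) * Real.exp (c * t) :=
        mul_le_mul_of_nonneg_left h1 (Real.exp_pos _).le
    _ = Real.exp (c * t - u * Real.cosh t) := by rw [← Real.exp_add]; ring_nf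

lemma cosh_factor_le {t : ℝ} (ht : 0 < t) : Real.cosh t ≤ Real.exp t := by
  simpa [abs_of_pos ht] using cosh_le_exp_abs t

lemma integrableOn_kern {ν u : ℝ} (hu : 0 < u) :
    IntegrableOn (fun t => Real.exp (-u * Real.cosh t) * Real.cosh (ν * t)) (Ioi (0:ℝ)) := by
  refine integrableOn_aux hu |ν| (by continuity) fun t ht => ?_
  rw [abs_of_pos (by positivity)]
  exact exp_factor_le |ν| le_rfl ht

lemma integrableOn_kern1 {ν u : ℝ} (hu : 0 < u) :
    IntegrableOn (fun t => Real.cosh t *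
      (Real.exp (-u * Real.cosh t) * Real.cosh (ν * t))) (Ioi (0:ℝ)) := by
  refine integrableOn_aux hu (|ν| + 1) (by continuity) fun t ht => ?_
  rw [abs_of_pos (by positivity)]
  calc Real.cosh t * (Real.exp (-u * Real.cosh t) * Real.cosh (ν * t))
      ≤ Real.exp t * Real.exp (|ν| * t - u * Real.cosh t) := by
        exact mul_le_mul (cosh_factor_le ht) (exp_factor_le _ le_rfl ht) (by positivity)
          (Real.exp_pos _).le
    _ = Real.exp ((|ν| + 1) * t - u * Real.cosh t) := by rw [← Real.exp_add]; ring_nf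

lemma integrableOn_kern2 {ν u : ℝ} (hu : 0 < u) :
    IntegrableOn (fun t => Real.cosh t ^ 2 *
      (Real.exp (-u * Real.cosh t) * Real.cosh (ν * t))) (Ioi (0:ℝ)) := by
  refine integrableOn_aux hu (|ν| + 2) (by continuity) fun t ht => ?_
  rw [abs_of_pos (by positivity)]
  have h2 : Real.cosh t ^ 2 ≤ Real.exp t ^ 2 :=
    pow_le_pow_left₀ (Real.cosh_pos t).le (cosh_factor_le ht) 2
  calc Real.cosh t ^ 2 * (Real.exp (-u * Real.cosh t) * Real.cosh (ν * t))
      ≤ Real.exp t ^ 2 * Real.exp (|ν| * t - u * Real.cosh t) := by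
        exact mul_le_mul h2 (exp_factor_le _ le_rfl ht) (by positivity) (by positivity)
    _ = Real.exp ((|ν| + 2) * t - u * Real.cosh t) := by
        rw [← Real.exp_nat_mul, ← Real.exp_add]; ring_nf

lemma integrableOn_kernS {ν u : ℝ} (hu : 0 < u) :
    IntegrableOn (fun t => Real.sinh t * Real.sinh (ν * t) *
      Real.exp (-u * Real.cosh t)) (Ioi (0:ℝ)) := by
  refine integrableOn_aux hu (|ν| + 1) (by continuity) fun t ht => ?_
  have h1 : |Real.sinh t| ≤ Real.exp t := by
    simpa [abs_of_pos (show (0:ℝ) < t from ht)] using abs_sinh_le_exp_abs t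
  have h2 : |Real.sinh (ν * t)| ≤ Real.exp (|ν| * t) := by
    refine (abs_sinh_le_exp_abs _).trans (Real.exp_le_exp.2 ?_)
    rw [abs_mul, abs_of_pos (show (0:ℝ) < t from ht)]
  calc |Real.sinh t * Real.sinh (ν * t) * Real.exp (-u * Real.cosh t)|
      = |Real.sinh t| * |Real.sinh (ν * t)| * Real.exp (-u * Real.cosh t) := by
        rw [abs_mul, abs_mul, abs_of_pos (Real.exp_pos _)]
    _ ≤ Real.exp t * Real.exp (|ν| * t) * Real.exp (-u * Real.cosh t) := by
        refine mul_le_mul (mul_le_mul h1 h2 (abs_nonneg _) (Real.exp_pos _).le) le_rfl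
          (Real.exp_pos _).le (by positivity)
    _ = Real.exp ((|ν| + 1) * t - u * Real.cosh t) := by rw [← Real.exp_add, ← Real.exp_add]; ring_nf

lemma besselK_pos {ν u : ℝ} (hu : 0 < u) : 0 < besselK ν u := by
  rw [besselK]
  rw [setIntegral_pos_iff_support_of_nonneg_ae]
  · have hsub : Ioi (0:ℝ) ⊆ Function.support fun t =>
        Real.exp (-u * Real.cosh t) * Real.cosh (ν * t) := by
      intro t _
      exact (mul_pos (Real.exp_pos _) (Real.cosh_pos _)).ne'
    rw [inter_eq_right.2 hsub] at *
    · simp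
  · filter_upwards with t
    positivity
  · exact integrableOn_kern hu

lemma bkK1_pos {ν u : ℝ} (hu : 0 < u) : 0 < bkK1 ν u := by
  rw [bkK1, setIntegral_pos_iff_support_of_nonneg_ae]
  · have hsub : Ioi (0:ℝ) ⊆ Function.support fun t =>
        Real.cosh t * (Real.exp (-u * Real.cosh t) * Real.cosh (ν * t)) := by
      intro t _
      exact (mul_pos (Real.cosh_pos _) (mul_pos (Real.exp_pos _) (Real.cosh_pos _))).ne'
    rw [inter_eq_right.2 hsub]
    simp
  · filter_upwards with t; positivity
  · exact integrableOn_kern1 hu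

lemma besselK_hasDerivAt {ν u : ℝ} (hu : 0 < u) :
    HasDerivAt (besselK ν) (-(bkK1 ν u)) u := by
  have key := hasDerivAt_integral_of_dominated_loc_of_deriv_le (μ := volume.restrict (Ioi 0))
    (F := fun x t => Real.exp (-x * Real.cosh t) * Real.cosh (ν * t))
    (F' := fun x t => -(Real.cosh t * (Real.exp (-x * Real.cosh t) * Real.cosh (ν * t))))
    (x₀ := u) (bound := fun t => Real.cosh t * (Real.exp (-(u/2) * Real.cosh t) * Real.cosh (ν * t)))
    (Metric.ball_mem_nhds u (half_pos hu))
    (Eventually.of_forall fun x => (Continuous.aestronglyMeasurable (by continuity)))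
    (integrableOn_kern hu) (Continuous.aestronglyMeasurable (by continuity))
    ?_ (integrableOn_kern1 (half_pos hu)) ?_
  · have h2 : (∫ t in Ioi (0:ℝ), -(Real.cosh t * (Real.exp (-u * Real.cosh t) * Real.cosh (ν * t))))
        = -(bkK1 ν u) := by
      rw [integral_neg, bkK1]
    rw [← h2]
    exact key.2
  · filter_upwards [ae_restrict_mem measurableSet_Ioi] with t ht
    intro x hx
    have hx2 : u/2 ≤ x := by
      have := abs_lt.1 (mem_ball_iff_norm.1 hx)
      linarith [this.1]
    rw [norm_neg, Real.norm_eq_abs, abs_of_pos (by positivity)]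
    have : Real.exp (-x * Real.cosh t) ≤ Real.exp (-(u/2) * Real.cosh t) := by
      apply Real.exp_le_exp.2
      have := Real.cosh_pos t
      nlinarith
    have hc := Real.cosh_pos (ν * t)
    have hc2 := Real.cosh_pos t
    gcongr
  · filter_upwards with t
    intro x hx
    have hlin : HasDerivAt (fun y : ℝ => -y * Real.cosh t) (-Real.cosh t) x := by
      simpa [neg_mul, Pi.neg_def] using (hasDerivAt_mul_const (Real.cosh t) (x := x)).neg
    have h := (hlin.exp.mul_const (Real.cosh (ν * t)))
    refine h.congr_deriv ?_
    ring

lemma bkK1_hasDerivAt {ν u : ℝ} (hu : 0 < u) :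
    HasDerivAt (bkK1 ν) (-(bkK2 ν u)) u := by
  have key := hasDerivAt_integral_of_dominated_loc_of_deriv_le (μ := volume.restrict (Ioi 0))
    (F := fun x t => Real.cosh t * (Real.exp (-x * Real.cosh t) * Real.cosh (ν * t)))
    (F' := fun x t => -(Real.cosh t ^ 2 * (Real.exp (-x * Real.cosh t) * Real.cosh (ν * t))))
    (x₀ := u)
    (bound := fun t => Real.cosh t ^ 2 * (Real.exp (-(u/2) * Real.cosh t) * Real.cosh (ν * t)))
    (Metric.ball_mem_nhds u (half_pos hu))
    (Eventually.of_forall fun x => (Continuous.aestronglyMeasurable (by continuity)))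
    (integrableOn_kern1 hu) (Continuous.aestronglyMeasurable (by continuity))
    ?_ (integrableOn_kern2 (half_pos hu)) ?_
  · have h2 : (∫ t in Ioi (0:ℝ),
        -(Real.cosh t ^ 2 * (Real.exp (-u * Real.cosh t) * Real.cosh (ν * t))))
        = -(bkK2 ν u) := by rw [integral_neg, bkK2]
    rw [← h2]
    exact key.2
  · filter_upwards [ae_restrict_mem measurableSet_Ioi] with t ht
    intro x hx
    have hx2 : u/2 ≤ x := by
      have := abs_lt.1 (mem_ball_iff_norm.1 hx)
      linarith [this.1]
    rw [norm_neg, Real.norm_eq_abs, abs_of_pos (by positivity)]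
    have hexp : Real.exp (-x * Real.cosh t) ≤ Real.exp (-(u/2) * Real.cosh t) := by
      apply Real.exp_le_exp.2
      have := Real.cosh_pos t
      nlinarith
    gcongr
  · filter_upwards with t
    intro x hx
    have hlin : HasDerivAt (fun y : ℝ => -y * Real.cosh t) (-Real.cosh t) x := by
      simpa [neg_mul, Pi.neg_def] using (hasDerivAt_mul_const (Real.cosh t) (x := x)).neg
    have h := ((hlin.exp.mul_const (Real.cosh (ν * t))).const_mul (Real.cosh t))
    refine h.congr_deriv ?_
    ring

lemma identity1 {ν u : ℝ} (hu : 0 < u) : ν * besselK ν u = u * bkS ν u := by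
  set g : ℝ → ℝ := fun t => (-u) * (Real.sinh t * Real.sinh (ν * t) * Real.exp (-u * Real.cosh t))
      + ν * (Real.exp (-u * Real.cosh t) * Real.cosh (ν * t)) with hg
  have hgint : IntegrableOn g (Ioi (0:ℝ)) :=
    ((integrableOn_kernS hu).const_mul (-u)).add ((integrableOn_kern hu).const_mul ν)
  have hderiv : ∀ t ∈ Ioi (0:ℝ),
      HasDerivAt (fun t => Real.exp (-u * Real.cosh t) * Real.sinh (ν * t)) (g t) t := by
    intro t _
    have h1 : HasDerivAt (fun s : ℝ => -u * Real.cosh s) (-u * Real.sinh t) t :=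
      (Real.hasDerivAt_cosh t).const_mul (-u)
    have h2 : HasDerivAt (fun s : ℝ => ν * s) ν t := by
      simpa using (hasDerivAt_id t).const_mul ν
    have h3 : HasDerivAt (fun s : ℝ => Real.sinh (ν * s)) (Real.cosh (ν * t) * ν) t :=
      (Real.hasDerivAt_sinh (ν * t)).comp t h2
    have h := (h1.exp).mul h3
    refine h.congr_deriv (Eq.symm ?_)
    rw [hg]; ring
  have htend : Tendsto (fun t => Real.exp (-u * Real.cosh t) * Real.sinh (ν * t)) atTop
      (nhds 0) := by
    refine squeeze_zero_norm' ?_ (tendsto_exp_lin_cosh hu |ν|)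
    filter_upwards [eventually_gt_atTop (0:ℝ)] with t ht
    rw [Real.norm_eq_abs, abs_mul, abs_of_pos (Real.exp_pos _)]
    have h1 : |Real.sinh (ν * t)| ≤ Real.exp (|ν| * t) := by
      refine (abs_sinh_le_exp_abs _).trans (Real.exp_le_exp.2 ?_)
      rw [abs_mul, abs_of_pos ht]
    calc Real.exp (-u * Real.cosh t) * |Real.sinh (ν * t)|
        ≤ Real.exp (-u * Real.cosh t) * Real.exp (|ν| * t) :=
          mul_le_mul_of_nonneg_left h1 (Real.exp_pos _).le
      _ = Real.exp (|ν| * t - u * Real.cosh t) := by rw [← Real.exp_add]; ring_nf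
  have key := integral_Ioi_of_hasDerivAt_of_tendsto
    (f := fun t => Real.exp (-u * Real.cosh t) * Real.sinh (ν * t)) (f' := g)
    (Continuous.continuousWithinAt (by continuity)) hderiv hgint htend
  simp only [Real.cosh_zero, mul_zero, Real.sinh_zero, sub_zero, mul_one] at key
  have hsplit : ∫ t in Ioi (0:ℝ), g t = (-u) * bkS ν u + ν * besselK ν u := by
    rw [hg, integral_add ((integrableOn_kernS hu).const_mul (-u))
      ((integrableOn_kern hu).const_mul ν), MeasureTheory.integral_const_mul,
      MeasureTheory.integral_const_mul, bkS, besselK]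
  rw [hsplit] at key
  linarith

lemma identity2 {ν u : ℝ} (hu : 0 < u) :
    u ^ 2 * bkK2 ν u = (u ^ 2 + ν ^ 2) * besselK ν u + u * bkK1 ν u := by
  set f : ℝ → ℝ := fun t => Real.exp (-u * Real.cosh t) *
      (-u * Real.sinh t * Real.cosh (ν * t) + ν * Real.sinh (ν * t)) with hf
  set g : ℝ → ℝ := fun t =>
      u ^ 2 * (Real.cosh t ^ 2 * (Real.exp (-u * Real.cosh t) * Real.cosh (ν * t)))
      + ((ν ^ 2 - u ^ 2) * (Real.exp (-u * Real.cosh t) * Real.cosh (ν * t))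
      + ((-u) * (Real.cosh t * (Real.exp (-u * Real.cosh t) * Real.cosh (ν * t)))
      + (-(2 * u * ν)) * (Real.sinh t * Real.sinh (ν * t) * Real.exp (-u * Real.cosh t)))) with hg
  have hgint : IntegrableOn g (Ioi (0:ℝ)) := by
    refine ((integrableOn_kern2 hu).const_mul _).add (((integrableOn_kern hu).const_mul _).add
      (((integrableOn_kern1 hu).const_mul _).add ((integrableOn_kernS hu).const_mul _)))
  have hderiv : ∀ t ∈ Ioi (0:ℝ), HasDerivAt f (g t) t := by
    intro t _
    have h1 : HasDerivAt (fun s : ℝ => -u * Real.cosh s) (-u * Real.sinh t) t :=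
      (Real.hasDerivAt_cosh t).const_mul (-u)
    have h2 : HasDerivAt (fun s : ℝ => ν * s) ν t := by
      simpa using (hasDerivAt_id t).const_mul ν
    have h3 : HasDerivAt (fun s : ℝ => Real.sinh (ν * s)) (Real.cosh (ν * t) * ν) t :=
      (Real.hasDerivAt_sinh (ν * t)).comp t h2
    have h4 : HasDerivAt (fun s : ℝ => Real.cosh (ν * s)) (Real.sinh (ν * t) * ν) t :=
      (Real.hasDerivAt_cosh (ν * t)).comp t h2
    have h5 : HasDerivAt (fun s : ℝ => -u * Real.sinh s * Real.cosh (ν * s))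
        (-u * Real.cosh t * Real.cosh (ν * t) + -u * Real.sinh t * (Real.sinh (ν * t) * ν)) t :=
      (((Real.hasDerivAt_sinh t).const_mul (-u)).mul h4)
    have h6 : HasDerivAt (fun s : ℝ => -u * Real.sinh s * Real.cosh (ν * s)
        + ν * Real.sinh (ν * s))
        ((-u * Real.cosh t * Real.cosh (ν * t) + -u * Real.sinh t * (Real.sinh (ν * t) * ν))
          + ν * (Real.cosh (ν * t) * ν)) t := h5.add (h3.const_mul ν)
    have h := (h1.exp).mul h6
    refine h.congr_deriv (Eq.symm ?_)
    have hs : Real.sinh t ^ 2 = Real.cosh t ^ 2 - 1 := by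
      have := Real.cosh_sq_sub_sinh_sq t; linarith
    rw [hg]
    simp only
    linear_combination (-(u ^ 2) * Real.exp (-u * Real.cosh t) * Real.cosh (ν * t)) * hs
  have hb1 : ∀ t : ℝ, 0 < t → |(-u) * Real.sinh t * Real.cosh (ν * t) + ν * Real.sinh (ν * t)|
      ≤ (u + |ν|) * Real.exp ((|ν| + 1) * t) := by
    intro t ht
    have e1 : |Real.sinh t| ≤ Real.exp t := by
      simpa [abs_of_pos ht] using abs_sinh_le_exp_abs t
    have e2 : Real.cosh (ν * t) ≤ Real.exp (|ν| * t) := by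
      refine (cosh_le_exp_abs _).trans (Real.exp_le_exp.2 ?_)
      rw [abs_mul, abs_of_pos ht]
    have e3 : |Real.sinh (ν * t)| ≤ Real.exp (|ν| * t) := by
      refine (abs_sinh_le_exp_abs _).trans (Real.exp_le_exp.2 ?_)
      rw [abs_mul, abs_of_pos ht]
    have e5 : Real.exp ((|ν| + 1) * t) = Real.exp (|ν| * t) * Real.exp t := by
      rw [← Real.exp_add]; ring_nf
    have c1 : u * |Real.sinh t| * Real.cosh (ν * t) ≤ u * (Real.exp t * Real.exp (|ν| * t)) := by
      have := mul_le_mul e1 e2 (Real.cosh_pos _).le (Real.exp_pos _).le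
      nlinarith [abs_nonneg (Real.sinh t), Real.cosh_pos (ν * t)]
    have e4 : (1:ℝ) ≤ Real.exp t := by
      rw [show (1:ℝ) = Real.exp 0 by simp]
      exact Real.exp_le_exp.2 ht.le
    have c2 : |ν| * |Real.sinh (ν * t)| ≤ |ν| * (Real.exp (|ν| * t) * Real.exp t) := by
      have : |Real.sinh (ν * t)| ≤ Real.exp (|ν| * t) * Real.exp t := by
        nlinarith [Real.exp_pos (|ν| * t), Real.exp_pos t]
      exact mul_le_mul_of_nonneg_left this (abs_nonneg ν)
    have habs : |(-u) * Real.sinh t * Real.cosh (ν * t) + ν * Real.sinh (ν * t)|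
        ≤ u * |Real.sinh t| * Real.cosh (ν * t) + |ν| * |Real.sinh (ν * t)| := by
      refine (abs_add_le _ _).trans ?_
      rw [abs_mul, abs_mul, abs_mul, abs_neg, abs_of_pos hu, abs_of_pos (Real.cosh_pos _)]
    rw [e5]
    nlinarith [c1, c2, habs]
  have htend : Tendsto f atTop (nhds 0) := by
    have htend0 : Tendsto (fun t => (u + |ν|) * Real.exp ((|ν| + 1) * t - u * Real.cosh t))
        atTop (nhds 0) := by
      simpa using (tendsto_exp_lin_cosh hu (|ν| + 1)).const_mul (u + |ν|)
    refine squeeze_zero_norm' ?_ htend0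
    filter_upwards [eventually_gt_atTop (0:ℝ)] with t ht
    rw [hf]
    simp only [Real.norm_eq_abs, abs_mul, abs_of_pos (Real.exp_pos _)]
    calc Real.exp (-u * Real.cosh t) * |(-u) * Real.sinh t * Real.cosh (ν * t)
          + ν * Real.sinh (ν * t)|
        ≤ Real.exp (-u * Real.cosh t) * ((u + |ν|) * Real.exp ((|ν| + 1) * t)) :=
          mul_le_mul_of_nonneg_left (hb1 t ht) (Real.exp_pos _).le
      _ = (u + |ν|) * Real.exp ((|ν| + 1) * t - u * Real.cosh t) := by
          rw [show (|ν| + 1) * t - u * Real.cosh t = -u * Real.cosh t + (|ν| + 1) * t by ring,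
            Real.exp_add]; ring
  have hcontf : Continuous f := by rw [hf]; fun_prop
  have key := integral_Ioi_of_hasDerivAt_of_tendsto (f := f) (f' := g)
    hcontf.continuousWithinAt hderiv hgint htend
  have hf0 : f 0 = 0 := by rw [hf]; simp
  rw [hf0, sub_zero] at key
  have hsplit : ∫ t in Ioi (0:ℝ), g t = u ^ 2 * bkK2 ν u + ((ν ^ 2 - u ^ 2) * besselK ν u
      + ((-u) * bkK1 ν u + (-(2 * u * ν)) * bkS ν u)) := by
    have hIA : IntegrableOn (fun t : ℝ =>
        u ^ 2 * (Real.cosh t ^ 2 * (Real.exp (-u * Real.cosh t) * Real.cosh (ν * t))))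
        (Ioi (0:ℝ)) := (integrableOn_kern2 hu).const_mul _
    have hIB : IntegrableOn (fun t : ℝ =>
        (ν ^ 2 - u ^ 2) * (Real.exp (-u * Real.cosh t) * Real.cosh (ν * t)))
        (Ioi (0:ℝ)) := (integrableOn_kern hu).const_mul _
    have hIC : IntegrableOn (fun t : ℝ =>
        (-u) * (Real.cosh t * (Real.exp (-u * Real.cosh t) * Real.cosh (ν * t))))
        (Ioi (0:ℝ)) := (integrableOn_kern1 hu).const_mul _
    have hID : IntegrableOn (fun t : ℝ =>
        (-(2 * u * ν)) * (Real.sinh t * Real.sinh (ν * t) * Real.exp (-u * Real.cosh t)))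
        (Ioi (0:ℝ)) := (integrableOn_kernS hu).const_mul _
    have hICD : IntegrableOn (fun t : ℝ =>
        (-u) * (Real.cosh t * (Real.exp (-u * Real.cosh t) * Real.cosh (ν * t)))
        + (-(2 * u * ν)) * (Real.sinh t * Real.sinh (ν * t) * Real.exp (-u * Real.cosh t)))
        (Ioi (0:ℝ)) := hIC.add hID
    have hIBCD : IntegrableOn (fun t : ℝ =>
        (ν ^ 2 - u ^ 2) * (Real.exp (-u * Real.cosh t) * Real.cosh (ν * t))
        + ((-u) * (Real.cosh t * (Real.exp (-u * Real.cosh t) * Real.cosh (ν * t)))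
        + (-(2 * u * ν)) * (Real.sinh t * Real.sinh (ν * t) * Real.exp (-u * Real.cosh t))))
        (Ioi (0:ℝ)) := hIB.add hICD
    simp only [hg]
    rw [integral_add hIA hIBCD, integral_add hIB hICD, integral_add hIC hID,
      MeasureTheory.integral_const_mul, MeasureTheory.integral_const_mul,
      MeasureTheory.integral_const_mul, MeasureTheory.integral_const_mul,
      bkK2, besselK, bkK1, bkS]
  rw [hsplit] at key
  have h2uv : 2 * u * ν * bkS ν u = 2 * ν ^ 2 * besselK ν u := by
    linear_combination 2 * ν * (identity1 (ν := ν) hu).symm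
  linarith

lemma K1_sq_gt {ν u : ℝ} (hu : 0 < u) :
    besselK ν u ^ 2 + bkS ν u ^ 2 < bkK1 ν u ^ 2 := by
  set b : ℝ → ℝ := fun t => Real.exp (-u * Real.cosh t) * Real.cosh (ν * t) with hb
  set c : ℝ → ℝ := fun t => Real.sinh t * Real.sinh (ν * t) * Real.exp (-u * Real.cosh t) with hc
  set V : ℝ → ℂ := fun t => (b t : ℂ) + (c t : ℂ) * Complex.I with hV
  have hbint : IntegrableOn b (Ioi (0:ℝ)) := integrableOn_kern hu
  have hcint : IntegrableOn c (Ioi (0:ℝ)) := integrableOn_kernS hu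
  have hVint : IntegrableOn V (Ioi (0:ℝ)) := by
    refine (hbint.ofReal.add ?_)
    have := (hcint.ofReal (𝕜 := ℂ)).mul_const Complex.I
    exact this
  -- value of ∫ V
  have hVval : ∫ t in Ioi (0:ℝ), V t = (besselK ν u : ℂ) + (bkS ν u : ℂ) * Complex.I := by
    simp only [hV]
    have hb2 : Integrable (fun t => ((b t : ℝ) : ℂ)) (volume.restrict (Ioi 0)) := hbint.ofReal
    have hc2 : Integrable (fun t => ((c t : ℝ) : ℂ)) (volume.restrict (Ioi 0)) := hcint.ofReal
    rw [integral_add hb2 (hc2.mul_const Complex.I), integral_mul_const]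
    have e1 : (∫ t in Ioi (0:ℝ), ((b t : ℝ) : ℂ)) = ((∫ t in Ioi (0:ℝ), b t : ℝ) : ℂ) :=
      integral_ofReal
    have e2 : (∫ t in Ioi (0:ℝ), ((c t : ℝ) : ℂ)) = ((∫ t in Ioi (0:ℝ), c t : ℝ) : ℂ) :=
      integral_ofReal
    rw [e1, e2]
    rfl
  -- norm of V t
  have hVnorm : ∀ t : ℝ, ‖V t‖ = Real.sqrt (b t ^ 2 + c t ^ 2) := by
    intro t
    rw [hV]
    simp only
    rw [Complex.norm_add_mul_I]
  -- pointwise strict inequality on Ioi 0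
  have hpt : ∀ t ∈ Ioi (0:ℝ), ‖V t‖ < Real.cosh t * b t := by
    intro t ht
    rw [hVnorm]
    have hsq : b t ^ 2 + c t ^ 2 < (Real.cosh t * b t) ^ 2 := by
      rw [hb, hc]
      simp only
      have h1 : Real.sinh t ^ 2 = Real.cosh t ^ 2 - 1 := by
        have := Real.cosh_sq_sub_sinh_sq t; linarith
      have h2 : Real.sinh (ν * t) ^ 2 = Real.cosh (ν * t) ^ 2 - 1 := by
        have := Real.cosh_sq_sub_sinh_sq (ν * t); linarith
      have hst : 0 < Real.sinh t := Real.sinh_pos_iff.2 ht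
      have hexp := Real.exp_pos (-u * Real.cosh t)
      have key : (Real.cosh t * (Real.exp (-u * Real.cosh t) * Real.cosh (ν * t))) ^ 2
          - ((Real.exp (-u * Real.cosh t) * Real.cosh (ν * t)) ^ 2
            + (Real.sinh t * Real.sinh (ν * t) * Real.exp (-u * Real.cosh t)) ^ 2)
          = Real.exp (-u * Real.cosh t) ^ 2 * Real.sinh t ^ 2 := by
        linear_combination (-(Real.exp (-u * Real.cosh t) ^ 2) * (Real.sinh (ν * t) ^ 2 + 1)) * h1
          + (-(Real.exp (-u * Real.cosh t) ^ 2) * (Real.cosh t ^ 2 - 1)) * h2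
      have hpos : 0 < Real.exp (-u * Real.cosh t) ^ 2 * Real.sinh t ^ 2 :=
        mul_pos (pow_pos hexp 2) (pow_pos hst 2)
      linarith
    have hnn : 0 ≤ Real.cosh t * b t := by
      rw [hb]; positivity
    calc Real.sqrt (b t ^ 2 + c t ^ 2) < Real.sqrt ((Real.cosh t * b t) ^ 2) :=
      Real.sqrt_lt_sqrt (by positivity) hsq
    _ = Real.cosh t * b t := by rw [Real.sqrt_sq hnn]
  -- integrability of norm
  have hnint : IntegrableOn (fun t => ‖V t‖) (Ioi (0:ℝ)) := hVint.norm
  -- ∫ ‖V‖ < bkK1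
  have hlt : ∫ t in Ioi (0:ℝ), ‖V t‖ < bkK1 ν u := by
    have hdiff : 0 < ∫ t in Ioi (0:ℝ), (Real.cosh t * b t - ‖V t‖) := by
      rw [setIntegral_pos_iff_support_of_nonneg_ae]
      · have hsub : Ioi (0:ℝ) ⊆ Function.support fun t => Real.cosh t * b t - ‖V t‖ := by
          intro t ht
          exact (sub_pos.2 (hpt t ht)).ne'
        rw [inter_eq_right.2 hsub]
        simp
      · filter_upwards [ae_restrict_mem measurableSet_Ioi] with t ht
        exact sub_nonneg.2 (hpt t ht).le
      · exact ((integrableOn_kern1 hu).sub hnint)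
    have hsplit : ∫ t in Ioi (0:ℝ), (Real.cosh t * b t - ‖V t‖)
        = bkK1 ν u - ∫ t in Ioi (0:ℝ), ‖V t‖ := by
      rw [integral_sub (integrableOn_kern1 hu) hnint, bkK1]
    linarith [hsplit ▸ hdiff]
  -- triangle inequality
  have htri : ‖∫ t in Ioi (0:ℝ), V t‖ ≤ ∫ t in Ioi (0:ℝ), ‖V t‖ :=
    norm_integral_le_integral_norm V
  rw [hVval] at htri
  have hnormval : ‖(besselK ν u : ℂ) + (bkS ν u : ℂ) * Complex.I‖
      = Real.sqrt (besselK ν u ^ 2 + bkS ν u ^ 2) := by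
    rw [Complex.norm_add_mul_I]
  rw [hnormval] at htri
  have hfinal : Real.sqrt (besselK ν u ^ 2 + bkS ν u ^ 2) < bkK1 ν u := lt_of_le_of_lt htri hlt
  have h0 : 0 ≤ besselK ν u ^ 2 + bkS ν u ^ 2 := by positivity
  nlinarith [Real.sq_sqrt h0, Real.sqrt_nonneg (besselK ν u ^ 2 + bkS ν u ^ 2)]

lemma main_ineq {ν u : ℝ} (hu : 0 < u) :
    (u ^ 2 + ν ^ 2) * besselK ν u ^ 2 < u ^ 2 * bkK1 ν u ^ 2 := by
  have h1 := K1_sq_gt (ν := ν) hu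
  have h2 := identity1 (ν := ν) hu
  have h2sq : (ν * besselK ν u) ^ 2 = (u * bkS ν u) ^ 2 := by rw [h2]
  have h3 := mul_lt_mul_of_pos_left h1 (show (0:ℝ) < u ^ 2 by positivity)
  nlinarith [h3, h2sq]

lemma phi_hasDerivAt {ν u : ℝ} (hu : 0 < u) :
    HasDerivAt (fun x => x * -(bkK1 ν x) / besselK ν x)
      (((-(bkK1 ν u) + u * bkK2 ν u) * besselK ν u
        - u * -(bkK1 ν u) * -(bkK1 ν u)) / besselK ν u ^ 2) u := by
  have hn : HasDerivAt (fun x => x * -(bkK1 ν x)) (-(bkK1 ν u) + u * bkK2 ν u) u := by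
    have := (hasDerivAt_id u).mul (bkK1_hasDerivAt (ν := ν) hu).neg
    refine this.congr_deriv ?_
    simp only [id_eq, one_mul, neg_neg, Pi.neg_apply]
  exact hn.div (besselK_hasDerivAt hu) (besselK_pos hu).ne'

lemma phi_deriv_neg {ν u : ℝ} (hu : 0 < u) :
    ((-(bkK1 ν u) + u * bkK2 ν u) * besselK ν u
      - u * -(bkK1 ν u) * -(bkK1 ν u)) / besselK ν u ^ 2 < 0 := by
  have hK := besselK_pos (ν := ν) hu
  have hId := identity2 (ν := ν) hu
  have hMain := main_ineq (ν := ν) hu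
  apply div_neg_of_neg_of_pos _ (by positivity)
  have huN : u * ((-(bkK1 ν u) + u * bkK2 ν u) * besselK ν u
      - u * -(bkK1 ν u) * -(bkK1 ν u)) < 0 := by
    nlinarith
  nlinarith

lemma strictAntiOn_phi (ν : ℝ) :
    StrictAntiOn (fun x => x * -(bkK1 ν x) / besselK ν x) (Ioi (0:ℝ)) := by
  apply strictAntiOn_of_deriv_neg (convex_Ioi 0)
  · exact fun x hx => (phi_hasDerivAt hx).continuousAt.continuousWithinAt
  · intro x hx
    rw [interior_Ioi] at hx
    rw [(phi_hasDerivAt hx).deriv]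
    exact phi_deriv_neg hx

theorem besselK_logDeriv_strictAnti_geomConcave (ν : ℝ) :
    StrictAntiOn (fun u : ℝ => u * deriv (besselK ν) u / besselK ν u) (Ioi 0) ∧
    ∀ u₁ ∈ Ioi (0 : ℝ), ∀ u₂ ∈ Ioi (0 : ℝ), u₁ ≠ u₂ → ∀ l ∈ Ioo (0 : ℝ) 1,
      besselK ν u₁ ^ l * besselK ν u₂ ^ (1 - l) < besselK ν (u₁ ^ l * u₂ ^ (1 - l)) := by
  have hderivK : ∀ u : ℝ, 0 < u → deriv (besselK ν) u = -(bkK1 ν u) := fun u hu =>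
    (besselK_hasDerivAt hu).deriv
  have hEq : ∀ u ∈ Ioi (0:ℝ), u * deriv (besselK ν) u / besselK ν u
      = u * -(bkK1 ν u) / besselK ν u := by
    intro u hu
    rw [hderivK u hu]
  constructor
  · intro a ha b hb hab
    show b * deriv (besselK ν) b / besselK ν b < a * deriv (besselK ν) a / besselK ν a
    rw [hEq a ha, hEq b hb]
    exact strictAntiOn_phi ν ha hb hab
  · -- geometric concavity via strict concavity of log K(exp x)
    set g : ℝ → ℝ := fun x => Real.log (besselK ν (Real.exp x)) with hgdef
    have hgd : ∀ x : ℝ, HasDerivAt g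
        (Real.exp x * -(bkK1 ν (Real.exp x)) / besselK ν (Real.exp x)) x := by
      intro x
      have hK := besselK_hasDerivAt (ν := ν) (Real.exp_pos x)
      have hcomp := hK.comp x (Real.hasDerivAt_exp x)
      have hlog := hcomp.log (besselK_pos (Real.exp_pos x)).ne'
      refine hlog.congr_deriv ?_
      simp only [Function.comp_apply]
      ring
    have hdg : deriv g = fun x => Real.exp x * -(bkK1 ν (Real.exp x))
        / besselK ν (Real.exp x) := funext fun x => (hgd x).deriv
    have hanti : StrictAntiOn (deriv g) (interior (univ : Set ℝ)) := by
      rw [interior_univ]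
      intro x _ y _ hxy
      rw [hdg]
      exact strictAntiOn_phi ν (Real.exp_pos x) (Real.exp_pos y) (Real.exp_lt_exp.2 hxy)
    have hconc : StrictConcaveOn ℝ (univ : Set ℝ) g :=
      StrictAntiOn.strictConcaveOn_of_deriv convex_univ
        (fun x _ => (hgd x).continuousAt.continuousWithinAt) hanti
    intro u₁ hu₁ u₂ hu₂ hne l hl
    rw [mem_Ioi] at hu₁ hu₂
    obtain ⟨hl0, hl1⟩ := hl
    have hxne : Real.log u₁ ≠ Real.log u₂ := by
      intro h
      exact hne (Real.log_injOn_pos (mem_Ioi.2 hu₁) (mem_Ioi.2 hu₂) h)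
    have hkey := hconc.2 (mem_univ (Real.log u₁)) (mem_univ (Real.log u₂)) hxne hl0
      (show (0:ℝ) < 1 - l by linarith) (show l + (1 - l) = 1 by ring)
    simp only [smul_eq_mul, hgdef] at hkey
    rw [Real.exp_log hu₁, Real.exp_log hu₂] at hkey
    have hw : Real.exp (l * Real.log u₁ + (1 - l) * Real.log u₂) = u₁ ^ l * u₂ ^ (1 - l) := by
      rw [Real.exp_add, Real.rpow_def_of_pos hu₁, Real.rpow_def_of_pos hu₂,
        mul_comm (Real.log u₁) l, mul_comm (Real.log u₂) (1 - l)]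
    rw [hw] at hkey
    -- hkey : l * log (K u₁) + (1-l) * log (K u₂) < log (K (u₁^l * u₂^(1-l)))
    have hK1 := besselK_pos (ν := ν) hu₁
    have hK2 := besselK_pos (ν := ν) hu₂
    have hKw := besselK_pos (ν := ν) (show (0:ℝ) < u₁ ^ l * u₂ ^ (1 - l) by positivity)
    have hlogL : l * Real.log (besselK ν u₁) + (1 - l) * Real.log (besselK ν u₂)
        = Real.log (besselK ν u₁ ^ l * besselK ν u₂ ^ (1 - l)) := by
      rw [Real.log_mul (Real.rpow_pos_of_pos hK1 l).ne' (Real.rpow_pos_of_pos hK2 (1 - l)).ne', Real.log_rpow hK1,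
        Real.log_rpow hK2]
    rw [hlogL] at hkey
    have := Real.exp_lt_exp.2 hkey
    rwa [Real.exp_log (by positivity), Real.exp_log hKw] at this
end
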